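/- arXiv:1309.4416 — 8 statements merged into one kernel-verified Lean document; each statement's English description precedes it below -/
import Mathlib

section
/- If A is a counter-free finite state automaton, then its determinization Â (via the subset construction) is also a counter-free automaton. -/
/-!
A run of the subset automaton on a word `u` from `S` ends in the set `u(S)` of states
`u`-reachable from `S`, so the claim is: if `u^m(S) = S` with `m > 0`, then `u(S) = S`.
Every state of `S` then has a `u^m`-predecessor in `S`; following predecessors backwards
from `w ∈ S` must, by finiteness, run into a `u^m`-cycle through some `t ∈ S`. Counter-freeness
turns this cycle into a `u`-loop at `t`, which pads any path from `t` to a length that is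
a multiple of `m`; since `S` is fixed by every `u^(m n)`, this shows `u(S) ⊆ S`.
Monotonicity of `u(·)` then gives `S = u^m(S) ⊆ u(S)`.
-/

namespace Stmt0

/-- A finite state automaton with alphabet `A` and state type `Q`. -/
structure FSA (A : Type*) (Q : Type*) where
  start : Set Q
  trans : Q → A → Q → Prop
  accept : Set Q

/-- `ReachesVia tr p u q` : there is a path through the transition relation `tr`
from `p` to `q` whose label is the word `u`. -/
def ReachesVia {Q : Type*} {A : Type*} (tr : Q → A → Q → Prop) : Q → List A → Q → Prop
  | p, [], q => p = q
  | p, e :: u, q => ∃ r, tr p e r ∧ ReachesVia tr r u q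

/-- `u ^ m` : the word `u` repeated `m` times. -/
def wpow {A : Type*} (u : List A) : ℕ → List A
  | 0 => []
  | n + 1 => u ++ wpow u n

/-- A transition relation is counter-free iff for all positive `m`, states `s`
and words `u`, if `u ^ m` labels a path from `s` to `s` then so does `u`. -/
def CounterFreeRel {Q : Type*} {A : Type*} (tr : Q → A → Q → Prop) : Prop :=
  ∀ m : ℕ, 0 < m → ∀ (s : Q) (u : List A), ReachesVia tr s (wpow u m) s → ReachesVia tr s u s

/-- An automaton is counter-free iff its transition relation is. -/
def FSA.CounterFree {A Q : Type*} (M : FSA A Q) : Prop := CounterFreeRel M.trans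

/-- The determinization (subset construction) of an FSA. -/
def det {A Q : Type*} (M : FSA A Q) : FSA A (Set Q) where
  start := {M.start}
  trans := fun S e T => T = {t | ∃ s ∈ S, M.trans s e t}
  accept := {S | ∃ s ∈ S, s ∈ M.accept}

open Relation Function

section Paths

variable {Q A : Type*} (tr : Q → A → Q → Prop)

theorem reachesVia_append (u v : List A) (p q : Q) :
    ReachesVia tr p (u ++ v) q ↔ ∃ r, ReachesVia tr p u r ∧ ReachesVia tr r v q := by
  induction u generalizing p with
  | nil => simp [ReachesVia]
  | cons e u ih =>
    simp only [List.cons_append, ReachesVia, ih]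
    grind

theorem wpow_add (u : List A) (a b : ℕ) : wpow u (a + b) = wpow u a ++ wpow u b := by
  induction a with
  | zero => simp [wpow]
  | succ n ih => simp [wpow, Nat.succ_add, ih]

theorem wpow_succ' (u : List A) (n : ℕ) : wpow u (n + 1) = wpow u n ++ u := by
  rw [wpow_add, wpow, wpow, List.append_nil]

theorem wpow_mul (u : List A) (a b : ℕ) : wpow u (a * b) = wpow (wpow u a) b := by
  induction b with
  | zero => simp [wpow]
  | succ n ih => rw [Nat.mul_succ, Nat.add_comm, wpow_add, ih, wpow]

theorem exists_reachesVia_wpow_of_reflTransGen {v : List A} {s t : Q}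
    (h : ReflTransGen (fun a b => ReachesVia tr a v b) s t) :
    ∃ k, ReachesVia tr s (wpow v k) t := by
  induction h with
  | refl => exact ⟨0, rfl⟩
  | tail _ hbc ih =>
    obtain ⟨k, hk⟩ := ih
    exact ⟨k + 1, by rw [wpow_succ', reachesVia_append]; exact ⟨_, hk, hbc⟩⟩

theorem exists_reachesVia_wpow_of_transGen {v : List A} {s t : Q}
    (h : TransGen (fun a b => ReachesVia tr a v b) s t) :
    ∃ k, 0 < k ∧ ReachesVia tr s (wpow v k) t := by
  obtain ⟨b, hsb, hbt⟩ := TransGen.tail'_iff.1 h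
  obtain ⟨k, hk⟩ := exists_reachesVia_wpow_of_reflTransGen tr hsb
  exact ⟨k + 1, k.succ_pos, by rw [wpow_succ', reachesVia_append]; exact ⟨b, hk, hbt⟩⟩

variable {tr} in
theorem CounterFreeRel.reachesVia_wpow_of_loop (h : CounterFreeRel tr) {u : List A} {k : ℕ}
    (hk : 0 < k) {t : Q} (hloop : ReachesVia tr t (wpow u k) t) (n : ℕ) :
    ReachesVia tr t (wpow u n) t := by
  induction n with
  | zero => rfl
  | succ n ih => exact (reachesVia_append tr _ _ t t).2 ⟨t, h k hk t u hloop, ih⟩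

def reachSet (v : List A) (S : Set Q) : Set Q := {t | ∃ s ∈ S, ReachesVia tr s v t}

theorem reachSet_mono (v : List A) : Monotone (reachSet tr v) :=
  fun _ _ hST _ ⟨s, hs, hst⟩ => ⟨s, hST hs, hst⟩

theorem reachSet_nil (S : Set Q) : reachSet tr [] S = S := by
  simp [reachSet, ReachesVia]

theorem reachSet_cons (e : A) (v : List A) (S : Set Q) :
    reachSet tr (e :: v) S = reachSet tr v {t | ∃ s ∈ S, tr s e t} := by
  ext x
  simp only [reachSet, ReachesVia, Set.mem_ofPred_eq]
  grind

theorem reachSet_append (u v : List A) (S : Set Q) :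
    reachSet tr (u ++ v) S = reachSet tr v (reachSet tr u S) := by
  ext x
  simp only [reachSet, reachesVia_append, Set.mem_ofPred_eq]
  grind

theorem reachSet_wpow (u : List A) (n : ℕ) : reachSet tr (wpow u n) = (reachSet tr u)^[n] := by
  induction n with
  | zero => funext S; exact reachSet_nil tr S
  | succ n ih => funext S; rw [wpow, reachSet_append, ih, iterate_succ_apply]

end Paths

theorem Relation.exists_cycle_of_forall_exists_pred {α : Type*} [Finite α] {r : α → α → Prop}
    {p : α → Prop} (hpred : ∀ x, p x → ∃ y, p y ∧ r y x) {w : α} (hw : p w) :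
    ∃ t, p t ∧ TransGen r t t ∧ ReflTransGen r t w := by
  choose F hF using fun x : {x // p x} => (hpred x x.2)
  let c : ℕ → {x // p x} := fun n => (fun x => ⟨F x, (hF x).1⟩)^[n] ⟨w, hw⟩
  have hstep : ∀ n, swap r (c n) (c (n + 1)) := fun n => by
    simp only [c, iterate_succ_apply']
    exact (hF _).2
  obtain ⟨i, j, hij, hcij⟩ : ∃ i j, i < j ∧ c i = c j := by
    obtain ⟨i, j, hne, heq⟩ := Finite.exists_ne_map_eq_of_infinite c
    rcases hne.lt_or_gt with hlt | hlt
    · exact ⟨i, j, hlt, heq⟩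
    · exact ⟨j, i, hlt, heq.symm⟩
  refine ⟨c i, (c i).2, ?_, ?_⟩
  · have hij' := Nat.rel_of_forall_rel_succ_of_lt (TransGen (swap r)) (f := fun n => (c n : α))
      (fun n => TransGen.single (hstep n)) hij
    rwa [← hcij, transGen_swap] at hij'
  · rw [← reflTransGen_swap]
    exact Nat.rel_of_forall_rel_succ_of_le (ReflTransGen (swap r))
      (f := fun n => (c n : α)) (fun n => ReflTransGen.single (hstep n)) i.zero_le

theorem reachesVia_det_iff {A Q : Type*} (M : FSA A Q) (v : List A) (S T : Set Q) :
    ReachesVia (det M).trans S v T ↔ T = reachSet M.trans v S := by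
  induction v generalizing S with
  | nil => simp only [ReachesVia, reachSet_nil, eq_comm]
  | cons e v ih =>
    simp only [ReachesVia, reachSet_cons, ← ih]
    simp [det]

section CounterFree

variable {Q A : Type*} [Finite Q] {tr : Q → A → Q → Prop}

theorem CounterFreeRel.reachSet_subset_of_reachSet_wpow_eq (h : CounterFreeRel tr)
    {u : List A} {m : ℕ} (hm : 0 < m) {S : Set Q} (hS : reachSet tr (wpow u m) S = S) :
    reachSet tr u S ⊆ S := by
  rintro x ⟨w, hw, hwx⟩
  have hpred : ∀ y, y ∈ S → ∃ z, z ∈ S ∧ ReachesVia tr z (wpow u m) y := fun y hy => by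
    rw [← hS] at hy
    exact hy
  obtain ⟨t, htS, hcycle, htw⟩ := Relation.exists_cycle_of_forall_exists_pred hpred hw
  obtain ⟨k, hk, hloop⟩ := exists_reachesVia_wpow_of_transGen tr hcycle
  obtain ⟨n, hpath⟩ := exists_reachesVia_wpow_of_reflTransGen tr htw
  rw [← wpow_mul] at hloop hpath
  have hpad := h.reachesVia_wpow_of_loop (Nat.mul_pos hm hk) hloop (m - 1)
  have hperiodic : reachSet tr (wpow u (m * (n + 1))) S = S := by
    rw [reachSet_wpow] at hS ⊢
    exact IsPeriodicPt.mul_const hS (n + 1)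
  have hlen : m * (n + 1) = (m - 1) + (m * n + 1) := by
    rw [Nat.mul_succ]
    omega
  rw [← hperiodic, hlen, wpow_add, wpow_succ']
  exact ⟨t, htS, (reachesVia_append tr _ _ _ _).2
    ⟨t, hpad, (reachesVia_append tr _ _ _ _).2 ⟨w, hpath, hwx⟩⟩⟩

theorem CounterFreeRel.reachSet_eq_of_reachSet_wpow_eq (h : CounterFreeRel tr)
    {u : List A} {m : ℕ} (hm : 0 < m) {S : Set Q} (hS : reachSet tr (wpow u m) S = S) :
    reachSet tr u S = S := by
  have hsub := h.reachSet_subset_of_reachSet_wpow_eq hm hS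
  refine hsub.antisymm ?_
  have := (reachSet_mono tr u).antitone_iterate_of_map_le hsub hm
  rw [reachSet_wpow] at hS
  simpa [hS] using this

end CounterFree

theorem counterFree_det_general {A Q : Type} [Finite Q] (M : FSA A Q)
    (h : M.CounterFree) : (det M).CounterFree := by
  intro m hm S u hS
  rw [reachesVia_det_iff] at hS ⊢
  exact (h.reachSet_eq_of_reachSet_wpow_eq hm hS.symm).symm

theorem counterFree_det {A Q : Type} [Finite A] [Finite Q] (M : FSA A Q)
    (h : M.CounterFree) : (det M).CounterFree :=
  counterFree_det_general M h

end Stmt0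
end

section
/- Let B be a bisimulation from a pointed RoCTL-structure (M, w) to a pointed RoCTL-structure (M̂, ŵ), and let (σ, σ̂) ∈ B^ω. For every deviation π̂ from σ̂ there exists a deviation π from σ with (π, π̂) ∈ B^ω. -/
/-! STATEMENT 2: bisimulations lift deviations. -/

namespace Stmt2
/-- A structure: a set of worlds `W`, a binary accessibility relation and a
valuation assigning to each world the set of atoms true there. -/
structure KStruct (V : Type) (W : Type) where
  rel : W → W → Prop
  val : W → Set V

variable {V W W' : Type}

/-- The accessibility relation is serial. -/
def KStruct.Serial (M : KStruct V W) : Prop := ∀ w, ∃ v, M.rel w v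

/-- `σ` is a fullpath through `M`. -/
def IsFullpath (M : KStruct V W) (σ : ℕ → W) : Prop := ∀ i, M.rel (σ i) (σ (i + 1))

/-- The suffix `σ≥n` of a fullpath. -/
def suffix (σ : ℕ → W) (n : ℕ) : ℕ → W := fun i => σ (i + n)

/-- A fullpath is failure-free iff the violation atom is false at all
positions `i > 0`. -/
def FailureFree (M : KStruct V W) (viol : V) (σ : ℕ → W) : Prop :=
  ∀ i, 0 < i → viol ∉ M.val (σ i)

/-- A RoCTL-structure: serial, and every world starts some failure-free fullpath. -/
def IsRoCTL (M : KStruct V W) (viol : V) : Prop :=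
  M.Serial ∧ ∀ w, ∃ σ, IsFullpath M σ ∧ σ 0 = w ∧ FailureFree M viol σ

/-- `π` is a deviation from `σ`: for some `i`, `π≤i = σ≤i` and `π≥(i+1)` is
failure-free. -/
def IsDeviation (M : KStruct V W) (viol : V) (σ π : ℕ → W) : Prop :=
  ∃ i, (∀ j ≤ i, π j = σ j) ∧ FailureFree M viol (suffix π (i + 1))

/-- RoCTL* formulas: atoms, ¬, ∧, U, N, A, O, ▲. -/
inductive Form (V : Type) : Type where
  | atom : V → Form V
  | neg : Form V → Form V
  | conj : Form V → Form V → Form V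
  | untl : Form V → Form V → Form V
  | next : Form V → Form V
  | fall : Form V → Form V
  | oblig : Form V → Form V
  | robust : Form V → Form V

/-- Truth of a RoCTL* formula on a fullpath. -/
def sat (M : KStruct V W) (viol : V) : Form V → (ℕ → W) → Prop
  | .atom p, σ => p ∈ M.val (σ 0)
  | .neg φ, σ => ¬ sat M viol φ σ
  | .conj φ ψ, σ => sat M viol φ σ ∧ sat M viol ψ σ
  | .untl φ ψ, σ => ∃ i, sat M viol ψ (suffix σ i) ∧ ∀ j < i, sat M viol φ (suffix σ j)
  | .next φ, σ => sat M viol φ (suffix σ 1)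
  | .fall φ, σ => ∀ π, IsFullpath M π → π 0 = σ 0 → sat M viol φ π
  | .oblig φ, σ => ∀ π, IsFullpath M π → π 0 = σ 0 → FailureFree M viol π → sat M viol φ π
  | .robust φ, σ => sat M viol φ σ ∧
      ∀ π, IsFullpath M π → IsDeviation M viol σ π → sat M viol φ π

/-- RoCTL* formulas have atoms ranging over `V \ {viol}`. -/
def ViolFree (viol : V) : Form V → Prop
  | .atom p => p ≠ viol
  | .neg φ => ViolFree viol φ
  | .conj φ ψ => ViolFree viol φ ∧ ViolFree viol ψ
  | .untl φ ψ => ViolFree viol φ ∧ ViolFree viol ψ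
  | .next φ => ViolFree viol φ
  | .fall φ => ViolFree viol φ
  | .oblig φ => ViolFree viol φ
  | .robust φ => ViolFree viol φ
/-- `B` is a bisimulation from the pointed structure `(M, w)` to `(M', w')`. -/
def IsBisim (M : KStruct V W) (M' : KStruct V W') (w : W) (w' : W')
    (B : W → W' → Prop) : Prop :=
  B w w' ∧
  (∀ u u', B u u' → M.val u = M'.val u') ∧
  (∀ u u' v, B u u' → M.rel u v → ∃ v', M'.rel u' v' ∧ B v v') ∧
  (∀ u u' v', B u u' → M'.rel u' v' → ∃ v, M.rel u v ∧ B v v')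

/-- `B^ω` relates fullpaths pointwise. -/
def BOmega (B : W → W' → Prop) (σ : ℕ → W) (σ' : ℕ → W') : Prop := ∀ i, B (σ i) (σ' i)

/-! The bisimulation's back condition lets us follow any path of `M'` step by step from a
`B`-related world of `M`. A deviation `π'` of `σ'` branches off at some `i`; keep `σ` up to
`i` and from `σ i` follow `π'≥i` by the back condition. The result is `B`-related to `π'` at
every position, and since related worlds carry the same atoms, the violation atom is absent
from its suffix after `i` exactly as it is from `π'`'s. -/

theorem IsFullpath.suffix {M : KStruct V W} {σ : ℕ → W} (hσ : IsFullpath M σ) (n : ℕ) :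
    IsFullpath M (suffix σ n) := fun i => by
  simpa only [Stmt2.suffix, Nat.add_right_comm] using hσ (i + n)

theorem BOmega.suffix {B : W → W' → Prop} {σ : ℕ → W} {σ' : ℕ → W'} (h : BOmega B σ σ')
    (n : ℕ) : BOmega B (suffix σ n) (suffix σ' n) := fun i => h (i + n)

theorem FailureFree.of_bOmega {M : KStruct V W} {M' : KStruct V W'} {viol : V}
    {B : W → W' → Prop} (hval : ∀ u u', B u u' → M.val u = M'.val u')
    {σ : ℕ → W} {σ' : ℕ → W'} (h : BOmega B σ σ') (hff : FailureFree M' viol σ') :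
    FailureFree M viol σ := fun i hi => by
  rw [hval _ _ (h i)]
  exact hff i hi

theorem exists_isFullpath_bOmega_of_back {M : KStruct V W} {M' : KStruct V W'}
    {B : W → W' → Prop} (hback : ∀ u u' v', B u u' → M'.rel u' v' → ∃ v, M.rel u v ∧ B v v')
    {π' : ℕ → W'} (hπ' : IsFullpath M' π') {x : W} (hx : B x (π' 0)) :
    ∃ π : ℕ → W, IsFullpath M π ∧ π 0 = x ∧ BOmega B π π' := by
  have hstep : ∀ n (u : {u // B u (π' n)}), ∃ v, M.rel u v ∧ B v (π' (n + 1)) :=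
    fun n u => hback u _ _ u.2 (hπ' n)
  choose next hnext using hstep
  let lift : ∀ n, {u // B u (π' n)} :=
    fun n => Nat.rec ⟨x, hx⟩ (fun n u => ⟨next n u, (hnext n u).2⟩) n
  exact ⟨fun n => (lift n).1, fun n => (hnext n (lift n)).1, rfl, fun n => (lift n).2⟩

/-- `τ` is indexed from position `i` on; there `σ i` is kept, hence the lemmas below assume
`τ 0 = σ i`. -/
def splice (σ : ℕ → W) (i : ℕ) (τ : ℕ → W) (n : ℕ) : W :=
  if n ≤ i then σ n else τ (n - i)

theorem splice_of_le {σ τ : ℕ → W} {i n : ℕ} (h : n ≤ i) : splice σ i τ n = σ n :=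
  if_pos h

theorem splice_of_ge {σ τ : ℕ → W} {i n : ℕ} (h : i ≤ n) (h0 : τ 0 = σ i) :
    splice σ i τ n = τ (n - i) := by
  unfold splice
  split_ifs with hn
  · obtain rfl : n = i := le_antisymm hn h
    rw [Nat.sub_self, h0]
  · rfl

theorem isFullpath_splice {M : KStruct V W} {σ τ : ℕ → W} {i : ℕ} (hσ : IsFullpath M σ)
    (hτ : IsFullpath M τ) (h0 : τ 0 = σ i) : IsFullpath M (splice σ i τ) := by
  intro n
  rcases lt_or_ge n i with hn | hn
  · rw [splice_of_le hn.le, splice_of_le hn]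
    exact hσ n
  · rw [splice_of_ge hn h0, splice_of_ge (Nat.le_succ_of_le hn) h0, Nat.succ_sub hn]
    exact hτ (n - i)

theorem bOmega_splice {B : W → W' → Prop} {σ τ : ℕ → W} {σ' π' : ℕ → W'} {i : ℕ}
    (hσ : BOmega B σ σ') (hpre : ∀ j ≤ i, π' j = σ' j) (hτ : BOmega B τ (suffix π' i))
    (h0 : τ 0 = σ i) : BOmega B (splice σ i τ) π' := by
  intro n
  rcases le_total n i with hn | hn
  · rw [splice_of_le hn, hpre n hn]
    exact hσ n
  · rw [splice_of_ge hn h0]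
    simpa only [suffix, Nat.sub_add_cancel hn] using hτ (n - i)

theorem bisim_deviation_lifting_general {V W W' : Type} (viol : V)
    (M : KStruct V W) (M' : KStruct V W') (w : W) (w' : W')
    (B : W → W' → Prop) (hB : IsBisim M M' w w' B)
    (σ : ℕ → W) (σ' : ℕ → W') (hσ : IsFullpath M σ)
    (hBω : BOmega B σ σ')
    (π' : ℕ → W') (hπ' : IsFullpath M' π') (hdev' : IsDeviation M' viol σ' π') :
    ∃ π : ℕ → W, IsFullpath M π ∧ IsDeviation M viol σ π ∧ BOmega B π π' := by
  obtain ⟨i, hpre, hff⟩ := hdev'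
  obtain ⟨-, hval, -, hback⟩ := hB
  have hstart : B (σ i) (suffix π' i 0) := by
    simpa only [suffix, Nat.zero_add, hpre i le_rfl] using hBω i
  obtain ⟨τ, hτ, hτ0, hτB⟩ := exists_isFullpath_bOmega_of_back hback (hπ'.suffix i) hstart
  have hπB : BOmega B (splice σ i τ) π' := bOmega_splice hBω hpre hτB hτ0
  exact ⟨splice σ i τ, isFullpath_splice hσ hτ hτ0,
    ⟨i, fun j hj => splice_of_le hj, hff.of_bOmega hval (hπB.suffix (i + 1))⟩, hπB⟩

theorem bisim_deviation_lifting {V W W' : Type} (viol : V)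
    (M : KStruct V W) (M' : KStruct V W') (w : W) (w' : W')
    (hM : IsRoCTL M viol) (hM' : IsRoCTL M' viol)
    (B : W → W' → Prop) (hB : IsBisim M M' w w' B)
    (σ : ℕ → W) (σ' : ℕ → W') (hσ : IsFullpath M σ) (hσ' : IsFullpath M' σ')
    (hBω : BOmega B σ σ')
    (π' : ℕ → W') (hπ' : IsFullpath M' π') (hdev' : IsDeviation M' viol σ' π') :
    ∃ π : ℕ → W, IsFullpath M π ∧ IsDeviation M viol σ π ∧ BOmega B π π' :=
  bisim_deviation_lifting_general viol M M' w w' B hB σ σ' hσ hBω π' hπ' hdev'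
end Stmt2
end

section
/- Let (M, w) and (M̂, ŵ) be pointed RoCTL-structures and B a bisimulation from (M, w) to (M̂, ŵ). Then for every pair of fullpaths (σ, σ̂) ∈ B^ω and every RoCTL* formula φ: M,σ ⊨ φ iff M̂,σ̂ ⊨ φ. -/
/-! STATEMENT 3: bisimilar paths satisfy the same RoCTL* formulas. -/

namespace Stmt3
/-- A structure: a set of worlds `W`, a binary accessibility relation and a
valuation assigning to each world the set of atoms true there. -/
structure KStruct (V : Type) (W : Type) where
  rel : W → W → Prop
  val : W → Set V

variable {V W W' : Type}

/-- The accessibility relation is serial. -/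
def KStruct.Serial (M : KStruct V W) : Prop := ∀ w, ∃ v, M.rel w v

/-- `σ` is a fullpath through `M`. -/
def IsFullpath (M : KStruct V W) (σ : ℕ → W) : Prop := ∀ i, M.rel (σ i) (σ (i + 1))

/-- The suffix `σ≥n` of a fullpath. -/
def suffix (σ : ℕ → W) (n : ℕ) : ℕ → W := fun i => σ (i + n)

/-- A fullpath is failure-free iff the violation atom is false at all
positions `i > 0`. -/
def FailureFree (M : KStruct V W) (viol : V) (σ : ℕ → W) : Prop :=
  ∀ i, 0 < i → viol ∉ M.val (σ i)

/-- A RoCTL-structure: serial, and every world starts some failure-free fullpath. -/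
def IsRoCTL (M : KStruct V W) (viol : V) : Prop :=
  M.Serial ∧ ∀ w, ∃ σ, IsFullpath M σ ∧ σ 0 = w ∧ FailureFree M viol σ

/-- `π` is a deviation from `σ`: for some `i`, `π≤i = σ≤i` and `π≥(i+1)` is
failure-free. -/
def IsDeviation (M : KStruct V W) (viol : V) (σ π : ℕ → W) : Prop :=
  ∃ i, (∀ j ≤ i, π j = σ j) ∧ FailureFree M viol (suffix π (i + 1))

/-- RoCTL* formulas: atoms, ¬, ∧, U, N, A, O, ▲. -/
inductive Form (V : Type) : Type where
  | atom : V → Form V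
  | neg : Form V → Form V
  | conj : Form V → Form V → Form V
  | untl : Form V → Form V → Form V
  | next : Form V → Form V
  | fall : Form V → Form V
  | oblig : Form V → Form V
  | robust : Form V → Form V

/-- Truth of a RoCTL* formula on a fullpath. -/
def sat (M : KStruct V W) (viol : V) : Form V → (ℕ → W) → Prop
  | .atom p, σ => p ∈ M.val (σ 0)
  | .neg φ, σ => ¬ sat M viol φ σ
  | .conj φ ψ, σ => sat M viol φ σ ∧ sat M viol ψ σ
  | .untl φ ψ, σ => ∃ i, sat M viol ψ (suffix σ i) ∧ ∀ j < i, sat M viol φ (suffix σ j)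
  | .next φ, σ => sat M viol φ (suffix σ 1)
  | .fall φ, σ => ∀ π, IsFullpath M π → π 0 = σ 0 → sat M viol φ π
  | .oblig φ, σ => ∀ π, IsFullpath M π → π 0 = σ 0 → FailureFree M viol π → sat M viol φ π
  | .robust φ, σ => sat M viol φ σ ∧
      ∀ π, IsFullpath M π → IsDeviation M viol σ π → sat M viol φ π

/-- RoCTL* formulas have atoms ranging over `V \ {viol}`. -/
def ViolFree (viol : V) : Form V → Prop
  | .atom p => p ≠ viol
  | .neg φ => ViolFree viol φ
  | .conj φ ψ => ViolFree viol φ ∧ ViolFree viol ψ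
  | .untl φ ψ => ViolFree viol φ ∧ ViolFree viol ψ
  | .next φ => ViolFree viol φ
  | .fall φ => ViolFree viol φ
  | .oblig φ => ViolFree viol φ
  | .robust φ => ViolFree viol φ
/-- `B` is a bisimulation from the pointed structure `(M, w)` to `(M', w')`. -/
def IsBisim (M : KStruct V W) (M' : KStruct V W') (w : W) (w' : W')
    (B : W → W' → Prop) : Prop :=
  B w w' ∧
  (∀ u u', B u u' → M.val u = M'.val u') ∧
  (∀ u u' v, B u u' → M.rel u v → ∃ v', M'.rel u' v' ∧ B v v') ∧
  (∀ u u' v', B u u' → M'.rel u' v' → ∃ v, M.rel u v ∧ B v v')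

/-- `B^ω` relates fullpaths pointwise. -/
def BOmega (B : W → W' → Prop) (σ : ℕ → W) (σ' : ℕ → W') : Prop := ∀ i, B (σ i) (σ' i)

/-! The path quantifiers `A` and `O` are handled by lifting a fullpath through one structure to a
`B`-related fullpath through the other, one step at a time using the zig (or zag) condition;
since related worlds carry the same valuation, failure-freeness transfers along related paths.
A deviation from `σ` is lifted by keeping the prefix of `σ'` and splicing in a lifted suffix.
The zig-zag conditions are symmetric, so each case only needs one implication. -/

def Forth (M : KStruct V W) (M' : KStruct V W') (B : W → W' → Prop) : Prop :=
  ∀ u u' v, B u u' → M.rel u v → ∃ v', M'.rel u' v' ∧ B v v'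

structure IsZigZag (M : KStruct V W) (M' : KStruct V W') (B : W → W' → Prop) : Prop where
  val_eq : ∀ u u', B u u' → M.val u = M'.val u'
  forth : Forth M M' B
  back : Forth M' M (flip B)

theorem IsBisim.isZigZag {M : KStruct V W} {M' : KStruct V W'} {w : W} {w' : W'}
    {B : W → W' → Prop} (hB : IsBisim M M' w w' B) : IsZigZag M M' B :=
  ⟨hB.2.1, hB.2.2.1, fun u' u v' huu' hrel => hB.2.2.2 u u' v' huu' hrel⟩

theorem IsZigZag.symm {M : KStruct V W} {M' : KStruct V W'} {B : W → W' → Prop}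
    (hB : IsZigZag M M' B) : IsZigZag M' M (flip B) :=
  ⟨fun u' u huu' => (hB.val_eq u u' huu').symm, hB.back, hB.forth⟩

theorem IsFullpath.suffix {M : KStruct V W} {σ : ℕ → W} (hσ : IsFullpath M σ) (n : ℕ) :
    IsFullpath M (suffix σ n) := fun i => by
  simpa only [Stmt3.suffix, Nat.add_right_comm i 1 n] using hσ (i + n)

theorem BOmega.suffix {B : W → W' → Prop} {σ : ℕ → W} {σ' : ℕ → W'} (h : BOmega B σ σ')
    (n : ℕ) : BOmega B (suffix σ n) (suffix σ' n) :=
  fun i => h (i + n)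

theorem Forth.exists_fullpath {M : KStruct V W} {M' : KStruct V W'} {B : W → W' → Prop}
    (hF : Forth M M' B) {π : ℕ → W} (hπ : IsFullpath M π) {u' : W'} (h0 : B (π 0) u') :
    ∃ π', IsFullpath M' π' ∧ π' 0 = u' ∧ BOmega B π π' := by
  choose next hrel hnext using hF
  let π' : ∀ n, {v' // B (π n) v'} := fun n =>
    Nat.rec ⟨u', h0⟩ (fun n p => ⟨next _ _ _ p.2 (hπ n), hnext _ _ _ p.2 (hπ n)⟩) n
  exact ⟨fun n => (π' n).1, fun n => hrel _ _ _ (π' n).2 (hπ n), rfl, fun n => (π' n).2⟩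

theorem failureFree_iff_of_bOmega {M : KStruct V W} {M' : KStruct V W'} {B : W → W' → Prop}
    (hval : ∀ u u', B u u' → M.val u = M'.val u') (viol : V) {π : ℕ → W} {π' : ℕ → W'}
    (h : BOmega B π π') : FailureFree M viol π ↔ FailureFree M' viol π' :=
  forall₂_congr fun i _ => by rw [hval _ _ (h i)]

section Splice

def splice (σ : ℕ → W) (i : ℕ) (τ : ℕ → W) : ℕ → W := fun j => if j < i then σ j else τ (j - i)

variable {σ τ : ℕ → W} {i j : ℕ}

theorem splice_of_lt (h : j < i) : splice σ i τ j = σ j := if_pos h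

theorem splice_of_le (h : i ≤ j) : splice σ i τ j = τ (j - i) := if_neg (Nat.not_lt.mpr h)

theorem splice_suffix_of_eq (h : ∀ j < i, τ j = σ j) : splice σ i (suffix τ i) = τ := by
  funext j
  rcases lt_or_ge j i with hj | hj
  · rw [splice_of_lt hj, h j hj]
  · rw [splice_of_le hj, suffix, Nat.sub_add_cancel hj]

theorem splice_of_le_of_eq (h0 : τ 0 = σ i) (h : j ≤ i) : splice σ i τ j = σ j := by
  rcases h.lt_or_eq with hj | rfl
  · exact splice_of_lt hj
  · rw [splice_of_le le_rfl, Nat.sub_self, h0]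

theorem IsFullpath.splice {M : KStruct V W} (hσ : IsFullpath M σ) (hτ : IsFullpath M τ)
    (h0 : τ 0 = σ i) : IsFullpath M (splice σ i τ) := by
  intro j
  rcases lt_or_ge j i with hj | hj
  · rw [splice_of_lt hj, splice_of_le_of_eq h0 hj]
    exact hσ j
  · rw [splice_of_le hj, splice_of_le (by omega), Nat.sub_add_comm hj]
    exact hτ (j - i)

theorem BOmega.splice {B : W → W' → Prop} {σ' τ' : ℕ → W'} (hσ : BOmega B σ σ')
    (hτ : BOmega B τ τ') : BOmega B (splice σ i τ) (splice σ' i τ') := by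
  intro j
  rcases lt_or_ge j i with hj | hj
  · rw [splice_of_lt hj, splice_of_lt hj]
    exact hσ j
  · rw [splice_of_le hj, splice_of_le hj]
    exact hτ (j - i)

end Splice

section Transfer

variable {M : KStruct V W} {M' : KStruct V W'} {B : W → W' → Prop} {viol : V}

theorem IsZigZag.exists_deviation (hB : IsZigZag M M' B) {σ π : ℕ → W} {σ' : ℕ → W'}
    (hσ' : IsFullpath M' σ') (hσσ' : BOmega B σ σ') (hπ : IsFullpath M π)
    (hdev : IsDeviation M viol σ π) :
    ∃ π', IsFullpath M' π' ∧ IsDeviation M' viol σ' π' ∧ BOmega B π π' := by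
  obtain ⟨i, hπσ, hff⟩ := hdev
  obtain ⟨τ, hτ, hτ0, hπτ⟩ := hB.forth.exists_fullpath (hπ.suffix i)
    (u' := σ' i) (by simpa only [suffix, Nat.zero_add, hπσ i le_rfl] using hσσ' i)
  have hππ' : BOmega B π (splice σ' i τ) := by
    rw [← splice_suffix_of_eq (fun j hj => hπσ j hj.le)]
    exact hσσ'.splice hπτ
  refine ⟨splice σ' i τ, hσ'.splice hτ hτ0, ⟨i, fun j hj => splice_of_le_of_eq hτ0 hj, ?_⟩, hππ'⟩
  exact (failureFree_iff_of_bOmega hB.val_eq viol (hππ'.suffix (i + 1))).mp hff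

def Transfers (M : KStruct V W) (M' : KStruct V W') (B : W → W' → Prop) (viol : V)
    (φ : Form V) : Prop :=
  ∀ σ σ', IsFullpath M σ → IsFullpath M' σ' → BOmega B σ σ' →
    (sat M viol φ σ ↔ sat M' viol φ σ')

theorem Transfers.symm {φ : Form V} (h : Transfers M M' B viol φ) :
    Transfers M' M (flip B) viol φ :=
  fun σ' σ hσ' hσ hσσ' => (h σ σ' hσ hσ' hσσ').symm

variable {φ : Form V} {σ : ℕ → W} {σ' : ℕ → W'}

theorem sat_fall_of_sat_fall (hF : Forth M M' B) (hφ : Transfers M M' B viol φ)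
    (h0 : B (σ 0) (σ' 0)) (h : sat M' viol (.fall φ) σ') : sat M viol (.fall φ) σ := by
  intro π hπ hπ0
  obtain ⟨π', hπ', hπ'0, hππ'⟩ := hF.exists_fullpath hπ (u' := σ' 0) (hπ0 ▸ h0)
  exact (hφ π π' hπ hπ' hππ').mpr (h π' hπ' hπ'0)

theorem IsZigZag.sat_oblig_of_sat_oblig (hB : IsZigZag M M' B) (hφ : Transfers M M' B viol φ)
    (h0 : B (σ 0) (σ' 0)) (h : sat M' viol (.oblig φ) σ') : sat M viol (.oblig φ) σ := by
  intro π hπ hπ0 hff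
  obtain ⟨π', hπ', hπ'0, hππ'⟩ := hB.forth.exists_fullpath hπ (u' := σ' 0) (hπ0 ▸ h0)
  have hff' := (failureFree_iff_of_bOmega hB.val_eq viol hππ').mp hff
  exact (hφ π π' hπ hπ' hππ').mpr (h π' hπ' hπ'0 hff')

theorem IsZigZag.sat_robust_of_sat_robust (hB : IsZigZag M M' B)
    (hφ : Transfers M M' B viol φ) (hσ : IsFullpath M σ) (hσ' : IsFullpath M' σ')
    (hσσ' : BOmega B σ σ') (h : sat M' viol (.robust φ) σ') : sat M viol (.robust φ) σ := by
  refine ⟨(hφ σ σ' hσ hσ' hσσ').mpr h.1, fun π hπ hdev => ?_⟩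
  obtain ⟨π', hπ', hdev', hππ'⟩ := hB.exists_deviation hσ' hσσ' hπ hdev
  exact (hφ π π' hπ hπ' hππ').mpr (h.2 π' hπ' hdev')

theorem IsZigZag.transfers (hB : IsZigZag M M' B) (φ : Form V) : Transfers M M' B viol φ := by
  induction φ with
  | atom p => exact fun σ σ' _ _ hσσ' => by rw [sat, sat, hB.val_eq _ _ (hσσ' 0)]
  | neg φ ih => exact fun σ σ' hσ hσ' hσσ' => not_congr (ih σ σ' hσ hσ' hσσ')
  | conj φ ψ ihφ ihψ =>
    exact fun σ σ' hσ hσ' hσσ' => and_congr (ihφ σ σ' hσ hσ' hσσ') (ihψ σ σ' hσ hσ' hσσ')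
  | untl φ ψ ihφ ihψ =>
    exact fun σ σ' hσ hσ' hσσ' => exists_congr fun i =>
      and_congr (ihψ _ _ (hσ.suffix i) (hσ'.suffix i) (hσσ'.suffix i))
        (forall₂_congr fun j _ => ihφ _ _ (hσ.suffix j) (hσ'.suffix j) (hσσ'.suffix j))
  | next φ ih => exact fun σ σ' hσ hσ' hσσ' => ih _ _ (hσ.suffix 1) (hσ'.suffix 1) (hσσ'.suffix 1)
  | fall φ ih =>
    exact fun σ σ' _ _ hσσ' => ⟨sat_fall_of_sat_fall hB.back ih.symm (hσσ' 0),
      sat_fall_of_sat_fall hB.forth ih (hσσ' 0)⟩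
  | oblig φ ih =>
    exact fun σ σ' _ _ hσσ' => ⟨hB.symm.sat_oblig_of_sat_oblig ih.symm (hσσ' 0),
      hB.sat_oblig_of_sat_oblig ih (hσσ' 0)⟩
  | robust φ ih =>
    exact fun σ σ' hσ hσ' hσσ' => ⟨hB.symm.sat_robust_of_sat_robust ih.symm hσ' hσ hσσ',
      hB.sat_robust_of_sat_robust ih hσ hσ' hσσ'⟩

end Transfer

theorem bisim_truth_on_paths_general {V W W' : Type} (viol : V)
    (M : KStruct V W) (M' : KStruct V W') (w : W) (w' : W')
    (B : W → W' → Prop) (hB : IsBisim M M' w w' B)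
    (σ : ℕ → W) (σ' : ℕ → W') (hσ : IsFullpath M σ) (hσ' : IsFullpath M' σ')
    (hBω : BOmega B σ σ')
    (φ : Form V) :
    sat M viol φ σ ↔ sat M' viol φ σ' :=
  hB.isZigZag.transfers φ σ σ' hσ hσ' hBω

theorem bisim_truth_on_paths {V W W' : Type} (viol : V)
    (M : KStruct V W) (M' : KStruct V W') (w : W) (w' : W')
    (hM : IsRoCTL M viol) (hM' : IsRoCTL M' viol)
    (B : W → W' → Prop) (hB : IsBisim M M' w w' B)
    (σ : ℕ → W) (σ' : ℕ → W') (hσ : IsFullpath M σ) (hσ' : IsFullpath M' σ')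
    (hBω : BOmega B σ σ')
    (φ : Form V) (hφ : ViolFree viol φ) :
    sat M viol φ σ ↔ sat M' viol φ σ' :=
  bisim_truth_on_paths_general viol M M' w w' B hB σ σ' hσ hσ' hBω φ
end Stmt3
end

section
/- RoCTL* is bisimulation invariant: for every RoCTL* formula φ and every pair of bisimilar pointed RoCTL-structures (M, w) and (M̂, ŵ), it holds that M,w ⊨ φ iff M̂,ŵ ⊨ φ (truth at a world). -/
/-! STATEMENT 4: RoCTL* is bisimulation invariant (truth at a world). -/

namespace Stmt4
/-- A structure: a set of worlds `W`, a binary accessibility relation and a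
valuation assigning to each world the set of atoms true there. -/
structure KStruct (V : Type) (W : Type) where
  rel : W → W → Prop
  val : W → Set V

variable {V W W' : Type}

/-- The accessibility relation is serial. -/
def KStruct.Serial (M : KStruct V W) : Prop := ∀ w, ∃ v, M.rel w v

/-- `σ` is a fullpath through `M`. -/
def IsFullpath (M : KStruct V W) (σ : ℕ → W) : Prop := ∀ i, M.rel (σ i) (σ (i + 1))

/-- The suffix `σ≥n` of a fullpath. -/
def suffix (σ : ℕ → W) (n : ℕ) : ℕ → W := fun i => σ (i + n)

/-- A fullpath is failure-free iff the violation atom is false at all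
positions `i > 0`. -/
def FailureFree (M : KStruct V W) (viol : V) (σ : ℕ → W) : Prop :=
  ∀ i, 0 < i → viol ∉ M.val (σ i)

/-- A RoCTL-structure: serial, and every world starts some failure-free fullpath. -/
def IsRoCTL (M : KStruct V W) (viol : V) : Prop :=
  M.Serial ∧ ∀ w, ∃ σ, IsFullpath M σ ∧ σ 0 = w ∧ FailureFree M viol σ

/-- `π` is a deviation from `σ`: for some `i`, `π≤i = σ≤i` and `π≥(i+1)` is
failure-free. -/
def IsDeviation (M : KStruct V W) (viol : V) (σ π : ℕ → W) : Prop :=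
  ∃ i, (∀ j ≤ i, π j = σ j) ∧ FailureFree M viol (suffix π (i + 1))

/-- RoCTL* formulas: atoms, ¬, ∧, U, N, A, O, ▲. -/
inductive Form (V : Type) : Type where
  | atom : V → Form V
  | neg : Form V → Form V
  | conj : Form V → Form V → Form V
  | untl : Form V → Form V → Form V
  | next : Form V → Form V
  | fall : Form V → Form V
  | oblig : Form V → Form V
  | robust : Form V → Form V

/-- Truth of a RoCTL* formula on a fullpath. -/
def sat (M : KStruct V W) (viol : V) : Form V → (ℕ → W) → Prop
  | .atom p, σ => p ∈ M.val (σ 0)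
  | .neg φ, σ => ¬ sat M viol φ σ
  | .conj φ ψ, σ => sat M viol φ σ ∧ sat M viol ψ σ
  | .untl φ ψ, σ => ∃ i, sat M viol ψ (suffix σ i) ∧ ∀ j < i, sat M viol φ (suffix σ j)
  | .next φ, σ => sat M viol φ (suffix σ 1)
  | .fall φ, σ => ∀ π, IsFullpath M π → π 0 = σ 0 → sat M viol φ π
  | .oblig φ, σ => ∀ π, IsFullpath M π → π 0 = σ 0 → FailureFree M viol π → sat M viol φ π
  | .robust φ, σ => sat M viol φ σ ∧
      ∀ π, IsFullpath M π → IsDeviation M viol σ π → sat M viol φ π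

/-- RoCTL* formulas have atoms ranging over `V \ {viol}`. -/
def ViolFree (viol : V) : Form V → Prop
  | .atom p => p ≠ viol
  | .neg φ => ViolFree viol φ
  | .conj φ ψ => ViolFree viol φ ∧ ViolFree viol ψ
  | .untl φ ψ => ViolFree viol φ ∧ ViolFree viol ψ
  | .next φ => ViolFree viol φ
  | .fall φ => ViolFree viol φ
  | .oblig φ => ViolFree viol φ
  | .robust φ => ViolFree viol φ
/-- `B` is a bisimulation from the pointed structure `(M, w)` to `(M', w')`. -/
def IsBisim (M : KStruct V W) (M' : KStruct V W') (w : W) (w' : W')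
    (B : W → W' → Prop) : Prop :=
  B w w' ∧
  (∀ u u', B u u' → M.val u = M'.val u') ∧
  (∀ u u' v, B u u' → M.rel u v → ∃ v', M'.rel u' v' ∧ B v v') ∧
  (∀ u u' v', B u u' → M'.rel u' v' → ∃ v, M.rel u v ∧ B v v')

/-- `B^ω` relates fullpaths pointwise. -/
def BOmega (B : W → W' → Prop) (σ : ℕ → W) (σ' : ℕ → W') : Prop := ∀ i, B (σ i) (σ' i)
/-- Truth at a world: truth on some fullpath starting at that world. -/
def satW (M : KStruct V W) (viol : V) (φ : Form V) (w : W) : Prop :=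
  ∃ π, IsFullpath M π ∧ π 0 = w ∧ sat M viol φ π

/-!
A bisimulation lifts every fullpath, step by step, to a pointwise related fullpath, and since
related worlds carry the same atoms (the violation atom included) failure-freeness transfers.
A deviation is lifted by lifting its tail from the branching point and splicing it onto the
related path. Hence truth on pointwise related fullpaths agrees, by induction on the formula.
-/

/-- Bisimulation in the unpointed sense: the back-and-forth conditions without a base pair. -/
structure IsZigZag (M : KStruct V W) (M' : KStruct V W') (B : W → W' → Prop) : Prop where
  val_eq : ∀ u u', B u u' → M.val u = M'.val u'
  forth : ∀ u u' v, B u u' → M.rel u v → ∃ v', M'.rel u' v' ∧ B v v'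
  back : ∀ u u' v', B u u' → M'.rel u' v' → ∃ v, M.rel u v ∧ B v v'

section Paths

variable {M : KStruct V W}

lemma IsFullpath.suffix {σ : ℕ → W} (hσ : IsFullpath M σ) (n : ℕ) :
    IsFullpath M (suffix σ n) := fun i => by
  simpa only [Stmt4.suffix, Nat.add_right_comm] using hσ (i + n)

def splice (σ τ : ℕ → W) (i : ℕ) : ℕ → W := fun j => if j ≤ i then σ j else τ (j - i)

lemma splice_of_le {σ τ : ℕ → W} {i j : ℕ} (hj : j ≤ i) : splice σ τ i j = σ j :=
  if_pos hj

lemma suffix_splice {σ τ : ℕ → W} {i : ℕ} (h0 : τ 0 = σ i) : suffix (splice σ τ i) i = τ := by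
  funext j
  rcases j with _ | j
  · simp [suffix, splice, h0]
  · simp [suffix, splice]

lemma splice_suffix_self {σ π : ℕ → W} {i : ℕ} (hπ : ∀ j ≤ i, π j = σ j) :
    splice σ (suffix π i) i = π := by
  funext j
  by_cases hj : j ≤ i
  · simp [splice, hj, hπ j hj]
  · simp only [splice, suffix, if_neg hj]
    congr 1
    omega

lemma IsFullpath.splice {σ τ : ℕ → W} {i : ℕ} (hσ : IsFullpath M σ) (hτ : IsFullpath M τ)
    (h0 : τ 0 = σ i) : IsFullpath M (splice σ τ i) := by
  intro j
  by_cases hj : j < i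
  · rw [splice_of_le hj.le, splice_of_le hj]
    exact hσ j
  · obtain ⟨k, rfl⟩ : ∃ k, j = k + i := ⟨j - i, by omega⟩
    have hsuf : ∀ n, Stmt4.splice σ τ i (n + i) = τ n := congrFun (suffix_splice h0)
    rw [Nat.add_right_comm, hsuf, hsuf]
    exact hτ k

end Paths

section Bisimulation

variable {M : KStruct V W} {M' : KStruct V W'} {B : W → W' → Prop}

lemma BOmega.suffix {σ : ℕ → W} {σ' : ℕ → W'} (hB : BOmega B σ σ') (n : ℕ) :
    BOmega B (suffix σ n) (suffix σ' n) := fun i => hB (i + n)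

lemma BOmega.splice {σ τ : ℕ → W} {σ' τ' : ℕ → W'} (hσ : BOmega B σ σ') (hτ : BOmega B τ τ')
    (i : ℕ) : BOmega B (splice σ τ i) (splice σ' τ' i) := fun j => by
  by_cases hj : j ≤ i
  · simpa [Stmt4.splice, hj] using hσ j
  · simpa [Stmt4.splice, hj] using hτ (j - i)

lemma IsBisim.isZigZag {w : W} {w' : W'} (h : IsBisim M M' w w' B) : IsZigZag M M' B :=
  ⟨h.2.1, h.2.2.1, h.2.2.2⟩

lemma IsZigZag.symm (hZ : IsZigZag M M' B) : IsZigZag M' M (flip B) :=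
  ⟨fun u' u h => (hZ.val_eq u u' h).symm, fun u' u v' h hr => hZ.back u u' v' h hr,
    fun u' u v h hr => hZ.forth u u' v h hr⟩

lemma IsZigZag.failureFree_iff (hZ : IsZigZag M M' B) {viol : V} {σ : ℕ → W} {σ' : ℕ → W'}
    (hB : BOmega B σ σ') : FailureFree M viol σ ↔ FailureFree M' viol σ' := by
  simp only [FailureFree, hZ.val_eq _ _ (hB _)]

lemma IsZigZag.exists_lift (hZ : IsZigZag M M' B) {σ : ℕ → W} (hσ : IsFullpath M σ) {u' : W'}
    (h0 : B (σ 0) u') : ∃ σ', IsFullpath M' σ' ∧ σ' 0 = u' ∧ BOmega B σ σ' := by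
  choose next hrel hB using fun n (x : {x : W' // B (σ n) x}) =>
    hZ.forth (σ n) x.1 (σ (n + 1)) x.2 (hσ n)
  let lift : ∀ n, {x : W' // B (σ n) x} :=
    fun n => Nat.rec ⟨u', h0⟩ (fun n x => ⟨next n x, hB n x⟩) n
  exact ⟨fun n => (lift n).1, fun n => hrel n (lift n), rfl, fun n => (lift n).2⟩

lemma IsZigZag.exists_lift_deviation (hZ : IsZigZag M M' B) {viol : V} {σ π : ℕ → W}
    {σ' : ℕ → W'} (hσ' : IsFullpath M' σ') (hB : BOmega B σ σ') (hπ : IsFullpath M π)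
    (hdev : IsDeviation M viol σ π) :
    ∃ π', IsFullpath M' π' ∧ IsDeviation M' viol σ' π' ∧ BOmega B π π' := by
  obtain ⟨i, hprefix, hff⟩ := hdev
  obtain ⟨τ', hτ', hτ'0, hBτ⟩ :=
    hZ.exists_lift (hπ.suffix i) (by simpa [suffix, hprefix i le_rfl] using hB i)
  have hBπ : BOmega B π (splice σ' τ' i) := by
    simpa only [splice_suffix_self hprefix] using hB.splice hBτ i
  refine ⟨splice σ' τ' i, hσ'.splice hτ' hτ'0, ⟨i, fun j hj => splice_of_le hj, ?_⟩, hBπ⟩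
  exact (hZ.failureFree_iff (hBπ.suffix (i + 1))).mp hff

theorem IsZigZag.sat_iff (hZ : IsZigZag M M' B) (viol : V) (φ : Form V) {σ : ℕ → W}
    {σ' : ℕ → W'} (hσ : IsFullpath M σ) (hσ' : IsFullpath M' σ') (hB : BOmega B σ σ') :
    sat M viol φ σ ↔ sat M' viol φ σ' := by
  induction φ generalizing σ σ' with
  | atom p => simp only [sat, hZ.val_eq _ _ (hB 0)]
  | neg φ ih => exact not_congr (ih hσ hσ' hB)
  | conj φ ψ ihφ ihψ => exact and_congr (ihφ hσ hσ' hB) (ihψ hσ hσ' hB)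
  | untl φ ψ ihφ ihψ =>
    simp only [sat, fun n => ihφ (hσ.suffix n) (hσ'.suffix n) (hB.suffix n),
      fun n => ihψ (hσ.suffix n) (hσ'.suffix n) (hB.suffix n)]
  | next φ ih => exact ih (hσ.suffix 1) (hσ'.suffix 1) (hB.suffix 1)
  | fall φ ih =>
    constructor
    · intro h π' hπ' h0'
      obtain ⟨π, hπ, h0, hBπ⟩ := hZ.symm.exists_lift hπ' (h0' ▸ hB 0)
      exact (ih hπ hπ' hBπ).mp (h π hπ h0)
    · intro h π hπ h0
      obtain ⟨π', hπ', h0', hBπ⟩ := hZ.exists_lift hπ (h0 ▸ hB 0)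
      exact (ih hπ hπ' hBπ).mpr (h π' hπ' h0')
  | oblig φ ih =>
    constructor
    · intro h π' hπ' h0' hff'
      obtain ⟨π, hπ, h0, hBπ⟩ := hZ.symm.exists_lift hπ' (h0' ▸ hB 0)
      exact (ih hπ hπ' hBπ).mp (h π hπ h0 ((hZ.failureFree_iff hBπ).mpr hff'))
    · intro h π hπ h0 hff
      obtain ⟨π', hπ', h0', hBπ⟩ := hZ.exists_lift hπ (h0 ▸ hB 0)
      exact (ih hπ hπ' hBπ).mpr (h π' hπ' h0' ((hZ.failureFree_iff hBπ).mp hff))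
  | robust φ ih =>
    refine and_congr (ih hσ hσ' hB) ⟨fun h π' hπ' hdev' => ?_, fun h π hπ hdev => ?_⟩
    · obtain ⟨π, hπ, hdev, hBπ⟩ := hZ.symm.exists_lift_deviation hσ hB hπ' hdev'
      exact (ih hπ hπ' hBπ).mp (h π hπ hdev)
    · obtain ⟨π', hπ', hdev', hBπ⟩ := hZ.exists_lift_deviation hσ' hB hπ hdev
      exact (ih hπ hπ' hBπ).mpr (h π' hπ' hdev')

lemma IsZigZag.satW_of_satW (hZ : IsZigZag M M' B) {viol : V} {φ : Form V} {w : W} {w' : W'}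
    (hw : B w w') (h : satW M viol φ w) : satW M' viol φ w' := by
  obtain ⟨π, hπ, rfl, hsat⟩ := h
  obtain ⟨π', hπ', h0', hB⟩ := hZ.exists_lift hπ hw
  exact ⟨π', hπ', h0', (hZ.sat_iff viol φ hπ hπ' hB).mp hsat⟩

end Bisimulation

theorem roctl_bisimulation_invariant_general {V W W' : Type} (viol : V)
    (M : KStruct V W) (M' : KStruct V W') (w : W) (w' : W')
    (hbisim : ∃ B : W → W' → Prop, IsBisim M M' w w' B)
    (φ : Form V) :
    satW M viol φ w ↔ satW M' viol φ w' := by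
  obtain ⟨B, hbisim⟩ := hbisim
  exact ⟨hbisim.isZigZag.satW_of_satW hbisim.1, hbisim.isZigZag.symm.satW_of_satW hbisim.1⟩

theorem roctl_bisimulation_invariant {V W W' : Type} (viol : V)
    (M : KStruct V W) (M' : KStruct V W') (w : W) (w' : W')
    (hM : IsRoCTL M viol) (hM' : IsRoCTL M' viol)
    (hbisim : ∃ B : W → W' → Prop, IsBisim M M' w w' B)
    (φ : Form V) (hφ : ViolFree viol φ) :
    satW M viol φ w ↔ satW M' viol φ w' :=
  roctl_bisimulation_invariant_general viol M M' w w' hbisim φ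
end Stmt4
end

section
/- Let φ be a RoCTL* formula and φ* a QCTL* formula such that for every tree RoCTL-structure M and fullpath σ through M: M,σ ⊨ φ (RoCTL* semantics) iff M,σ ⊨ φ* (tree QCTL* semantics). Then for every tree RoCTL-structure M and fullpath σ: M,σ ⊨ Oφ iff M,σ ⊨ A(NG¬v → φ*). -/
/-! STATEMENT 5: the Obligatory operator translates to A(NG¬v → φ*) in tree QCTL*. -/

namespace Stmt5
/-- A structure: a set of worlds `W`, a binary accessibility relation and a
valuation assigning to each world the set of atoms true there. -/
structure KStruct (V : Type) (W : Type) where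
  rel : W → W → Prop
  val : W → Set V

variable {V W W' : Type}

/-- The accessibility relation is serial. -/
def KStruct.Serial (M : KStruct V W) : Prop := ∀ w, ∃ v, M.rel w v

/-- `σ` is a fullpath through `M`. -/
def IsFullpath (M : KStruct V W) (σ : ℕ → W) : Prop := ∀ i, M.rel (σ i) (σ (i + 1))

/-- The suffix `σ≥n` of a fullpath. -/
def suffix (σ : ℕ → W) (n : ℕ) : ℕ → W := fun i => σ (i + n)

/-- A fullpath is failure-free iff the violation atom is false at all
positions `i > 0`. -/
def FailureFree (M : KStruct V W) (viol : V) (σ : ℕ → W) : Prop :=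
  ∀ i, 0 < i → viol ∉ M.val (σ i)

/-- A RoCTL-structure: serial, and every world starts some failure-free fullpath. -/
def IsRoCTL (M : KStruct V W) (viol : V) : Prop :=
  M.Serial ∧ ∀ w, ∃ σ, IsFullpath M σ ∧ σ 0 = w ∧ FailureFree M viol σ

/-- `π` is a deviation from `σ`: for some `i`, `π≤i = σ≤i` and `π≥(i+1)` is
failure-free. -/
def IsDeviation (M : KStruct V W) (viol : V) (σ π : ℕ → W) : Prop :=
  ∃ i, (∀ j ≤ i, π j = σ j) ∧ FailureFree M viol (suffix π (i + 1))

/-- RoCTL* formulas: atoms, ¬, ∧, U, N, A, O, ▲. -/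
inductive Form (V : Type) : Type where
  | atom : V → Form V
  | neg : Form V → Form V
  | conj : Form V → Form V → Form V
  | untl : Form V → Form V → Form V
  | next : Form V → Form V
  | fall : Form V → Form V
  | oblig : Form V → Form V
  | robust : Form V → Form V

/-- Truth of a RoCTL* formula on a fullpath. -/
def sat (M : KStruct V W) (viol : V) : Form V → (ℕ → W) → Prop
  | .atom p, σ => p ∈ M.val (σ 0)
  | .neg φ, σ => ¬ sat M viol φ σ
  | .conj φ ψ, σ => sat M viol φ σ ∧ sat M viol ψ σ
  | .untl φ ψ, σ => ∃ i, sat M viol ψ (suffix σ i) ∧ ∀ j < i, sat M viol φ (suffix σ j)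
  | .next φ, σ => sat M viol φ (suffix σ 1)
  | .fall φ, σ => ∀ π, IsFullpath M π → π 0 = σ 0 → sat M viol φ π
  | .oblig φ, σ => ∀ π, IsFullpath M π → π 0 = σ 0 → FailureFree M viol π → sat M viol φ π
  | .robust φ, σ => sat M viol φ σ ∧
      ∀ π, IsFullpath M π → IsDeviation M viol σ π → sat M viol φ π

/-- RoCTL* formulas have atoms ranging over `V \ {viol}`. -/
def ViolFree (viol : V) : Form V → Prop
  | .atom p => p ≠ viol
  | .neg φ => ViolFree viol φ
  | .conj φ ψ => ViolFree viol φ ∧ ViolFree viol ψ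
  | .untl φ ψ => ViolFree viol φ ∧ ViolFree viol ψ
  | .next φ => ViolFree viol φ
  | .fall φ => ViolFree viol φ
  | .oblig φ => ViolFree viol φ
  | .robust φ => ViolFree viol φ
/-- QCTL* formulas: atoms, ¬, ∧, U, N, A and the quantifier ∀p. -/
inductive QForm (V : Type) : Type where
  | atom : V → QForm V
  | neg : QForm V → QForm V
  | conj : QForm V → QForm V → QForm V
  | untl : QForm V → QForm V → QForm V
  | next : QForm V → QForm V
  | fall : QForm V → QForm V
  | qall : V → QForm V → QForm V

/-- `M'` is a `p`-variant of `M`: same worlds and relation, valuations agreeing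
except possibly on `p`. -/
def PVariant (M M' : KStruct V W) (p : V) : Prop :=
  M'.rel = M.rel ∧ ∀ w, M'.val w \ {p} = M.val w \ {p}

/-- Truth of a QCTL* formula on a fullpath of a structure. -/
def qsat : QForm V → KStruct V W → (ℕ → W) → Prop
  | .atom p, M, σ => p ∈ M.val (σ 0)
  | .neg φ, M, σ => ¬ qsat φ M σ
  | .conj φ ψ, M, σ => qsat φ M σ ∧ qsat ψ M σ
  | .untl φ ψ, M, σ => ∃ i, qsat ψ M (suffix σ i) ∧ ∀ j < i, qsat φ M (suffix σ j)
  | .next φ, M, σ => qsat φ M (suffix σ 1)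
  | .fall φ, M, σ => ∀ π, IsFullpath M π → π 0 = σ 0 → qsat φ M π
  | .qall p φ, M, σ => ∀ M' : KStruct V W, PVariant M M' p → qsat φ M' σ

/-- `M` is a tree: unique predecessors, no cycles, and a root reaching all
other nodes. -/
def IsTree (M : KStruct V W) : Prop :=
  (∀ x y z : W, M.rel x z → M.rel y z → x = y) ∧
  (∀ x : W, ¬ Relation.TransGen M.rel x x) ∧
  ∃ r : W, ∀ y : W, y ≠ r → Relation.TransGen M.rel r y

namespace QForm

def qor (a b : QForm V) : QForm V := .neg (.conj (.neg a) (.neg b))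
def qimp (a b : QForm V) : QForm V := qor (.neg a) b
def qtop (viol : V) : QForm V := .neg (.conj (.atom viol) (.neg (.atom viol)))
def qF (viol : V) (a : QForm V) : QForm V := .untl (qtop viol) a
def qG (viol : V) (a : QForm V) : QForm V := .neg (qF viol (.neg a))
def qE (a : QForm V) : QForm V := .neg (.fall (.neg a))

@[simp]
theorem qsat_qimp {M : KStruct V W} {σ : ℕ → W} {a b : QForm V} :
    qsat (qimp a b) M σ ↔ (qsat a M σ → qsat b M σ) := by
  simp only [qimp, qor, qsat, not_not]
  tauto

@[simp]
theorem qsat_qtop {M : KStruct V W} {σ : ℕ → W} {viol : V} : qsat (qtop viol) M σ := by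
  simp only [qtop, qsat, not_and, not_not, imp_self]

@[simp]
theorem qsat_qF {M : KStruct V W} {σ : ℕ → W} {viol : V} {a : QForm V} :
    qsat (qF viol a) M σ ↔ ∃ i, qsat a M (suffix σ i) := by
  simp only [qF, qsat, qsat_qtop, implies_true, and_true]

@[simp]
theorem qsat_qG {M : KStruct V W} {σ : ℕ → W} {viol : V} {a : QForm V} :
    qsat (qG viol a) M σ ↔ ∀ i, qsat a M (suffix σ i) := by
  simp only [qG, qsat, qsat_qF, not_exists, not_not]

end QForm

theorem qsat_next_qG_neg_atom_iff_failureFree {M : KStruct V W} {σ : ℕ → W} {viol : V} :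
    qsat (.next (QForm.qG viol (.neg (.atom viol)))) M σ ↔ FailureFree M viol σ := by
  simp only [qsat, QForm.qsat_qG, suffix, FailureFree]
  constructor
  · intro h i hi
    obtain ⟨j, rfl⟩ := Nat.exists_eq_add_of_lt hi
    simpa [Nat.add_comm] using h j
  · intro h i
    simpa [Nat.add_comm] using h (i + 1) i.succ_pos

theorem oblig_to_QCTL_general {V : Type} (viol : V) (φ : Form V)
    (φs : QForm V)
    (h : ∀ (W : Type) (M : KStruct V W) (σ : ℕ → W),
      IsTree M → IsRoCTL M viol → IsFullpath M σ → (sat M viol φ σ ↔ qsat φs M σ)) :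
    ∀ (W : Type) (M : KStruct V W) (σ : ℕ → W),
      IsTree M → IsRoCTL M viol → IsFullpath M σ →
      (sat M viol (.oblig φ) σ ↔
        qsat (.fall (QForm.qimp (.next (QForm.qG viol (.neg (.atom viol)))) φs)) M σ) := by
  intro W M σ hT hR _
  simp only [sat, qsat.eq_6, QForm.qsat_qimp, qsat_next_qG_neg_atom_iff_failureFree]
  refine forall_congr' fun π => forall_congr' fun hπ => forall_congr' fun _ => ?_
  rw [h W M π hT hR hπ]

theorem oblig_to_QCTL {V : Type} (viol : V) (φ : Form V) (hVF : ViolFree viol φ)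
    (φs : QForm V)
    (h : ∀ (W : Type) (M : KStruct V W) (σ : ℕ → W),
      IsTree M → IsRoCTL M viol → IsFullpath M σ → (sat M viol φ σ ↔ qsat φs M σ)) :
    ∀ (W : Type) (M : KStruct V W) (σ : ℕ → W),
      IsTree M → IsRoCTL M viol → IsFullpath M σ →
      (sat M viol (.oblig φ) σ ↔
        qsat (.fall (QForm.qimp (.next (QForm.qG viol (.neg (.atom viol)))) φs)) M σ) :=
  oblig_to_QCTL_general viol φ φs h

end Stmt5
end

section
/- There is a constant c such that for every RoCTL* formula φ of length n, the QCTL* formula τ(φ) has length at most c·n, and for every tree RoCTL-structure M and fullpath σ through M: M,σ ⊨ φ (RoCTL* semantics) iff M,σ ⊨ τ(φ) (tree QCTL* semantics). -/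
/-! STATEMENT 7: the translation τ into tree QCTL* is linear in length and truth-preserving. -/

namespace Stmt7
/-- A structure: a set of worlds `W`, a binary accessibility relation and a
valuation assigning to each world the set of atoms true there. -/
structure KStruct (V : Type) (W : Type) where
  rel : W → W → Prop
  val : W → Set V

variable {V W W' : Type}

/-- The accessibility relation is serial. -/
def KStruct.Serial (M : KStruct V W) : Prop := ∀ w, ∃ v, M.rel w v

/-- `σ` is a fullpath through `M`. -/
def IsFullpath (M : KStruct V W) (σ : ℕ → W) : Prop := ∀ i, M.rel (σ i) (σ (i + 1))

/-- The suffix `σ≥n` of a fullpath. -/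
def suffix (σ : ℕ → W) (n : ℕ) : ℕ → W := fun i => σ (i + n)

/-- A fullpath is failure-free iff the violation atom is false at all
positions `i > 0`. -/
def FailureFree (M : KStruct V W) (viol : V) (σ : ℕ → W) : Prop :=
  ∀ i, 0 < i → viol ∉ M.val (σ i)

/-- A RoCTL-structure: serial, and every world starts some failure-free fullpath. -/
def IsRoCTL (M : KStruct V W) (viol : V) : Prop :=
  M.Serial ∧ ∀ w, ∃ σ, IsFullpath M σ ∧ σ 0 = w ∧ FailureFree M viol σ

/-- `π` is a deviation from `σ`: for some `i`, `π≤i = σ≤i` and `π≥(i+1)` is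
failure-free. -/
def IsDeviation (M : KStruct V W) (viol : V) (σ π : ℕ → W) : Prop :=
  ∃ i, (∀ j ≤ i, π j = σ j) ∧ FailureFree M viol (suffix π (i + 1))

/-- RoCTL* formulas: atoms, ¬, ∧, U, N, A, O, ▲. -/
inductive Form (V : Type) : Type where
  | atom : V → Form V
  | neg : Form V → Form V
  | conj : Form V → Form V → Form V
  | untl : Form V → Form V → Form V
  | next : Form V → Form V
  | fall : Form V → Form V
  | oblig : Form V → Form V
  | robust : Form V → Form V

/-- Truth of a RoCTL* formula on a fullpath. -/
def sat (M : KStruct V W) (viol : V) : Form V → (ℕ → W) → Prop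
  | .atom p, σ => p ∈ M.val (σ 0)
  | .neg φ, σ => ¬ sat M viol φ σ
  | .conj φ ψ, σ => sat M viol φ σ ∧ sat M viol ψ σ
  | .untl φ ψ, σ => ∃ i, sat M viol ψ (suffix σ i) ∧ ∀ j < i, sat M viol φ (suffix σ j)
  | .next φ, σ => sat M viol φ (suffix σ 1)
  | .fall φ, σ => ∀ π, IsFullpath M π → π 0 = σ 0 → sat M viol φ π
  | .oblig φ, σ => ∀ π, IsFullpath M π → π 0 = σ 0 → FailureFree M viol π → sat M viol φ π
  | .robust φ, σ => sat M viol φ σ ∧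
      ∀ π, IsFullpath M π → IsDeviation M viol σ π → sat M viol φ π

/-- RoCTL* formulas have atoms ranging over `V \ {viol}`. -/
def ViolFree (viol : V) : Form V → Prop
  | .atom p => p ≠ viol
  | .neg φ => ViolFree viol φ
  | .conj φ ψ => ViolFree viol φ ∧ ViolFree viol ψ
  | .untl φ ψ => ViolFree viol φ ∧ ViolFree viol ψ
  | .next φ => ViolFree viol φ
  | .fall φ => ViolFree viol φ
  | .oblig φ => ViolFree viol φ
  | .robust φ => ViolFree viol φ
/-- QCTL* formulas: atoms, ¬, ∧, U, N, A and the quantifier ∀p. -/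
inductive QForm (V : Type) : Type where
  | atom : V → QForm V
  | neg : QForm V → QForm V
  | conj : QForm V → QForm V → QForm V
  | untl : QForm V → QForm V → QForm V
  | next : QForm V → QForm V
  | fall : QForm V → QForm V
  | qall : V → QForm V → QForm V

/-- `M'` is a `p`-variant of `M`: same worlds and relation, valuations agreeing
except possibly on `p`. -/
def PVariant (M M' : KStruct V W) (p : V) : Prop :=
  M'.rel = M.rel ∧ ∀ w, M'.val w \ {p} = M.val w \ {p}

/-- Truth of a QCTL* formula on a fullpath of a structure. -/
def qsat : QForm V → KStruct V W → (ℕ → W) → Prop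
  | .atom p, M, σ => p ∈ M.val (σ 0)
  | .neg φ, M, σ => ¬ qsat φ M σ
  | .conj φ ψ, M, σ => qsat φ M σ ∧ qsat ψ M σ
  | .untl φ ψ, M, σ => ∃ i, qsat ψ M (suffix σ i) ∧ ∀ j < i, qsat φ M (suffix σ j)
  | .next φ, M, σ => qsat φ M (suffix σ 1)
  | .fall φ, M, σ => ∀ π, IsFullpath M π → π 0 = σ 0 → qsat φ M π
  | .qall p φ, M, σ => ∀ M' : KStruct V W, PVariant M M' p → qsat φ M' σ

/-- `M` is a tree: unique predecessors, no cycles, and a root reaching all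
other nodes. -/
def IsTree (M : KStruct V W) : Prop :=
  (∀ x y z : W, M.rel x z → M.rel y z → x = y) ∧
  (∀ x : W, ¬ Relation.TransGen M.rel x x) ∧
  ∃ r : W, ∀ y : W, y ≠ r → Relation.TransGen M.rel r y

namespace QForm

def qor (a b : QForm V) : QForm V := .neg (.conj (.neg a) (.neg b))
def qimp (a b : QForm V) : QForm V := qor (.neg a) b
def qtop (viol : V) : QForm V := .neg (.conj (.atom viol) (.neg (.atom viol)))
def qF (viol : V) (a : QForm V) : QForm V := .untl (qtop viol) a
def qG (viol : V) (a : QForm V) : QForm V := .neg (qF viol (.neg a))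
def qE (a : QForm V) : QForm V := .neg (.fall (.neg a))

end QForm
/-- The largest atom occurring in a QCTL* formula over ℕ. -/
def QForm.maxAtom : QForm ℕ → ℕ
  | .atom p => p
  | .neg φ => maxAtom φ
  | .conj φ ψ => max (maxAtom φ) (maxAtom ψ)
  | .untl φ ψ => max (maxAtom φ) (maxAtom ψ)
  | .next φ => maxAtom φ
  | .fall φ => maxAtom φ
  | .qall p φ => max p (maxAtom φ)

/-- Atoms are natural numbers; the violation atom `v` is `0`. γ = NNG¬v. -/
def gammaQ : QForm ℕ := .next (.next (QForm.qG 0 (.neg (.atom 0))))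

/-- τ^▽(ψ) = ∀y [Gy → E[(Gy ∨ F(y ∧ γ)) ∧ ψ]] for an atom `y` not occurring in `ψ`. -/
def tauDia (ψ : QForm ℕ) : QForm ℕ :=
  let y := ψ.maxAtom + 1
  .qall y (QForm.qimp (QForm.qG 0 (.atom y))
    (QForm.qE (.conj
      (QForm.qor (QForm.qG 0 (.atom y)) (QForm.qF 0 (.conj (.atom y) gammaQ))) ψ)))

/-- The translation τ from RoCTL* into QCTL*. -/
def tau : Form ℕ → QForm ℕ
  | .atom p => .atom p
  | .neg φ => .neg (tau φ)
  | .conj φ ψ => .conj (tau φ) (tau ψ)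
  | .untl φ ψ => .untl (tau φ) (tau ψ)
  | .next φ => .next (tau φ)
  | .fall φ => .fall (tau φ)
  | .oblig φ => .fall (QForm.qimp (.next (QForm.qG 0 (.neg (.atom 0)))) (tau φ))
  | .robust φ => .neg (tauDia (.neg (tau φ)))
/-- Length of a RoCTL* formula. -/
def Form.len : Form ℕ → ℕ
  | .atom _ => 1
  | .neg φ => φ.len + 1
  | .conj φ ψ => φ.len + ψ.len + 1
  | .untl φ ψ => φ.len + ψ.len + 1
  | .next φ => φ.len + 1
  | .fall φ => φ.len + 1
  | .oblig φ => φ.len + 1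
  | .robust φ => φ.len + 1

/-- Length of a QCTL* formula. -/
def QForm.len : QForm ℕ → ℕ
  | .atom _ => 1
  | .neg φ => φ.len + 1
  | .conj φ ψ => φ.len + ψ.len + 1
  | .untl φ ψ => φ.len + ψ.len + 1
  | .next φ => φ.len + 1
  | .fall φ => φ.len + 1
  | .qall _ φ => φ.len + 1

/-! τ is compositional and τ(O φ) reads failure-freeness off directly, so the work is in ▲.
There τ^▽(ψ) says: however the fresh atom `y` is laid along `σ`, some path from `σ 0` satisfies
`ψ` and either stays on `y` or leaves it at a point from which it is failure-free after the next
step. Marking exactly the nodes of `σ` with `y`, a path that stays on `y` is `σ` itself and one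
that leaves it at position `i` agrees with `σ` up to `i`, because in a tree two fullpaths from the
same root that meet have the same prefix. So τ^▽(ψ) holds iff `ψ` holds on `σ` or on a deviation
from `σ`. Each clause of τ adds at most 54 symbols, whence the constant 55. -/

section General
variable {V W : Type}

theorem IsFullpath.suffix {M : KStruct V W} {σ : ℕ → W} (h : IsFullpath M σ) (n : ℕ) :
    IsFullpath M (suffix σ n) := fun i => by
  simpa only [Stmt7.suffix, Nat.add_right_comm i 1 n] using h (i + n)

@[simp]
theorem suffix_apply (σ : ℕ → W) (n i : ℕ) : suffix σ n i = σ (i + n) := rfl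

theorem suffix_suffix (σ : ℕ → W) (m n : ℕ) : suffix (suffix σ m) n = suffix σ (m + n) :=
  funext fun i => congrArg σ (by omega)

theorem qsat_qor {a b : QForm V} {M : KStruct V W} {σ : ℕ → W} :
    qsat (QForm.qor a b) M σ ↔ qsat a M σ ∨ qsat b M σ := by
  simp only [QForm.qor, qsat]; tauto

theorem qsat_qimp {a b : QForm V} {M : KStruct V W} {σ : ℕ → W} :
    qsat (QForm.qimp a b) M σ ↔ (qsat a M σ → qsat b M σ) := by
  simp only [QForm.qimp, qsat_qor, qsat]; tauto

theorem qsat_qF {viol : V} {a : QForm V} {M : KStruct V W} {σ : ℕ → W} :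
    qsat (QForm.qF viol a) M σ ↔ ∃ i, qsat a M (suffix σ i) := by
  simp [QForm.qF, QForm.qtop, qsat]

theorem qsat_qG {viol : V} {a : QForm V} {M : KStruct V W} {σ : ℕ → W} :
    qsat (QForm.qG viol a) M σ ↔ ∀ i, qsat a M (suffix σ i) := by
  simp [QForm.qG, qsat_qF, qsat]

theorem qsat_qE {a : QForm V} {M : KStruct V W} {σ : ℕ → W} :
    qsat (QForm.qE a) M σ ↔ ∃ π, IsFullpath M π ∧ π 0 = σ 0 ∧ qsat a M π := by
  simp [QForm.qE, qsat]

theorem qsat_next_qG_not_iff_failureFree {viol : V} {M : KStruct V W} {σ : ℕ → W} :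
    qsat (.next (QForm.qG viol (.neg (.atom viol)))) M σ ↔ FailureFree M viol σ := by
  simp only [qsat, qsat_qG, suffix_apply, zero_add, FailureFree]
  refine ⟨fun h i hi => ?_, fun h i => h (i + 1) i.succ_pos⟩
  obtain ⟨j, rfl⟩ := Nat.exists_eq_add_of_lt hi
  simpa [add_comm] using h j

theorem pvariant_iff {M M' : KStruct V W} {p : V} :
    PVariant M M' p ↔ M'.rel = M.rel ∧ ∀ w, ∀ a ≠ p, (a ∈ M'.val w ↔ a ∈ M.val w) := by
  simp only [PVariant, Set.ext_iff, Set.mem_sdiff, Set.mem_singleton_iff]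
  refine and_congr_right fun _ => forall_congr' fun w => ⟨fun h a ha => ?_, fun h a => ?_⟩
  · simpa [ha] using h a
  · by_cases ha : a = p <;> simp [ha, h a]

theorem PVariant.symm {M M' : KStruct V W} {p : V} (h : PVariant M M' p) : PVariant M' M p :=
  ⟨h.1.symm, fun w => (h.2 w).symm⟩

theorem PVariant.mem_val_iff {M M' : KStruct V W} {p a : V} (h : PVariant M M' p) (ha : a ≠ p)
    (w : W) : a ∈ M'.val w ↔ a ∈ M.val w :=
  (pvariant_iff.1 h).2 w a ha

theorem PVariant.isFullpath_iff {M M' : KStruct V W} {p : V} (h : PVariant M M' p)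
    {π : ℕ → W} : IsFullpath M' π ↔ IsFullpath M π := by
  rw [IsFullpath, IsFullpath, h.1]

theorem PVariant.failureFree_iff {M M' : KStruct V W} {p viol : V} (h : PVariant M M' p)
    (hviol : viol ≠ p) {π : ℕ → W} : FailureFree M' viol π ↔ FailureFree M viol π := by
  simp only [FailureFree, h.mem_val_iff hviol]

theorem exists_pvariant_mem_val_iff (M : KStruct V W) (p : V) (S : Set W) :
    ∃ M', PVariant M M' p ∧ ∀ w, p ∈ M'.val w ↔ w ∈ S := by
  refine ⟨⟨M.rel, fun w => M.val w \ {p} ∪ {a | a = p ∧ w ∈ S}⟩, pvariant_iff.2 ⟨rfl, ?_⟩, ?_⟩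
  · intro w a ha; simp [ha]
  · intro w; simp

theorem PVariant.exists_comm {X Y Z : KStruct V W} {p q : V} (hqp : q ≠ p)
    (hY : PVariant X Y p) (hZ : PVariant X Z q) :
    ∃ N, PVariant Y N q ∧ PVariant Z N p := by
  obtain ⟨N, hN, hNq⟩ := exists_pvariant_mem_val_iff Y q {w | q ∈ Z.val w}
  refine ⟨N, hN, pvariant_iff.2 ⟨hN.1.trans (hY.1.trans hZ.1.symm), fun w a hap => ?_⟩⟩
  by_cases haq : a = q
  · subst haq; exact hNq w
  · rw [hN.mem_val_iff haq, hY.mem_val_iff hap, hZ.mem_val_iff haq]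

theorem IsFullpath.transGen {M : KStruct V W} {σ : ℕ → W} (hσ : IsFullpath M σ) {a b : ℕ}
    (hab : a < b) : Relation.TransGen M.rel (σ a) (σ b) := by
  induction b, hab using Nat.le_induction with
  | base => exact .single (hσ a)
  | succ n _ ih => exact ih.tail (hσ n)

theorem IsTree.fullpath_agree {M : KStruct V W} (hT : IsTree M) {σ π : ℕ → W}
    (hσ : IsFullpath M σ) (hπ : IsFullpath M π) (h0 : π 0 = σ 0) :
    ∀ i k, π i = σ k → i = k ∧ ∀ j ≤ i, π j = σ j := by
  obtain ⟨huniq, hacyc, -⟩ := hT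
  intro i
  induction i with
  | zero =>
    refine fun k hk => ⟨?_, fun j hj => by rwa [Nat.le_zero.1 hj]⟩
    by_contra hk0
    have := hσ.transGen (Nat.pos_of_ne_zero (Ne.symm hk0))
    rw [← hk, h0] at this
    exact hacyc _ this
  | succ i ih =>
    rintro (_ | k) hk
    · have := hπ.transGen i.succ_pos
      rw [hk, ← h0] at this
      exact absurd this (hacyc _)
    · obtain ⟨rfl, hagree⟩ := ih k (huniq _ _ _ (hπ i) (hk ▸ hσ k))
      refine ⟨rfl, fun j hj => ?_⟩
      rcases Nat.le_succ_iff.1 hj with hj | rfl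
      exacts [hagree j hj, hk]

end General

section Translation
variable {W : Type}

theorem qsat_congr_pvariant (ψ : QForm ℕ) {p : ℕ} (hp : ψ.maxAtom < p) {M M' : KStruct ℕ W}
    (h : PVariant M M' p) (σ : ℕ → W) : qsat ψ M' σ ↔ qsat ψ M σ := by
  induction ψ generalizing M M' σ with
  | atom q => exact h.mem_val_iff (ne_of_lt hp) (σ 0)
  | neg a ih => exact not_congr (ih hp h σ)
  | conj a b iha ihb =>
    simp only [QForm.maxAtom, max_lt_iff] at hp
    exact and_congr (iha hp.1 h σ) (ihb hp.2 h σ)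
  | untl a b iha ihb =>
    simp only [QForm.maxAtom, max_lt_iff] at hp
    simp only [qsat, iha hp.1 h, ihb hp.2 h]
  | next a ih => exact ih hp h _
  | fall a ih => simp only [qsat, ih hp h, h.isFullpath_iff]
  | qall q a ih =>
    simp only [QForm.maxAtom, max_lt_iff] at hp
    have hqp : q ≠ p := ne_of_lt hp.1
    constructor
    · intro H M'' h''
      obtain ⟨N, hN, hN''⟩ := h.exists_comm hqp h''
      exact (ih hp.2 hN'' σ).1 (H N hN)
    · intro H M'' h''
      obtain ⟨N, hN, hN''⟩ := h.symm.exists_comm hqp h''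
      exact (ih hp.2 hN'' σ).1 (H N hN)

theorem qsat_gammaQ {M : KStruct ℕ W} {σ : ℕ → W} :
    qsat gammaQ M σ ↔ FailureFree M 0 (suffix σ 1) :=
  qsat_next_qG_not_iff_failureFree

theorem qsat_tauDia (ψ : QForm ℕ) {M : KStruct ℕ W} {σ : ℕ → W} :
    qsat (tauDia ψ) M σ ↔ ∀ M', PVariant M M' (ψ.maxAtom + 1) →
      (∀ i, ψ.maxAtom + 1 ∈ M'.val (σ i)) →
      ∃ π, IsFullpath M' π ∧ π 0 = σ 0 ∧
        ((∀ i, ψ.maxAtom + 1 ∈ M'.val (π i)) ∨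
          ∃ i, ψ.maxAtom + 1 ∈ M'.val (π i) ∧ FailureFree M' 0 (suffix π (i + 1))) ∧
        qsat ψ M' π := by
  simp only [tauDia, qsat, qsat_qimp, qsat_qG, qsat_qE, qsat_qor, qsat_qF, qsat_gammaQ,
    suffix_apply, zero_add, suffix_suffix]

theorem qsat_tauDia_iff {M : KStruct ℕ W} (hT : IsTree M) {σ : ℕ → W} (hσ : IsFullpath M σ)
    (ψ : QForm ℕ) :
    qsat (tauDia ψ) M σ ↔
      qsat ψ M σ ∨ ∃ π, IsFullpath M π ∧ IsDeviation M 0 σ π ∧ qsat ψ M π := by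
  have hy : ψ.maxAtom < ψ.maxAtom + 1 := Nat.lt_succ_self _
  have hy0 : (0 : ℕ) ≠ ψ.maxAtom + 1 := (Nat.succ_ne_zero _).symm
  rw [qsat_tauDia]
  constructor
  · intro H
    obtain ⟨M₀, hM₀, hmark⟩ := exists_pvariant_mem_val_iff M (ψ.maxAtom + 1) (Set.range σ)
    obtain ⟨π, hπ, h0, hguard, hψ⟩ := H M₀ hM₀ fun i => (hmark _).2 ⟨i, rfl⟩
    rw [hM₀.isFullpath_iff] at hπ
    rw [qsat_congr_pvariant ψ hy hM₀] at hψ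
    rcases hguard with hall | ⟨i, hi, hff⟩
    · have hπσ : π = σ := funext fun i => by
        obtain ⟨k, hk⟩ := (hmark _).1 (hall i)
        exact (hT.fullpath_agree hσ hπ h0 i k hk.symm).2 i le_rfl
      exact .inl (hπσ ▸ hψ)
    · obtain ⟨k, hk⟩ := (hmark _).1 hi
      exact .inr ⟨π, hπ, ⟨i, (hT.fullpath_agree hσ hπ h0 i k hk.symm).2,
        (hM₀.failureFree_iff hy0).1 hff⟩, hψ⟩
  · rintro H M' hM' hσy
    rcases H with hψ | ⟨π, hπ, ⟨i, hagree, hff⟩, hψ⟩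
    · exact ⟨σ, hM'.isFullpath_iff.2 hσ, rfl, .inl hσy, (qsat_congr_pvariant ψ hy hM' σ).2 hψ⟩
    · exact ⟨π, hM'.isFullpath_iff.2 hπ, hagree 0 (Nat.zero_le _),
        .inr ⟨i, hagree i le_rfl ▸ hσy i, (hM'.failureFree_iff hy0).2 hff⟩,
        (qsat_congr_pvariant ψ hy hM' π).2 hψ⟩

theorem len_tau_le (φ : Form ℕ) : (tau φ).len ≤ 55 * φ.len := by
  induction φ <;>
    simp only [tau, tauDia, gammaQ, Form.len, QForm.len, QForm.qimp, QForm.qor, QForm.qG,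
      QForm.qF, QForm.qtop, QForm.qE] <;>
    omega

theorem sat_iff_qsat_tau {M : KStruct ℕ W} (hT : IsTree M) (φ : Form ℕ) {σ : ℕ → W}
    (hσ : IsFullpath M σ) : sat M 0 φ σ ↔ qsat (tau φ) M σ := by
  induction φ generalizing σ with
  | atom p => rfl
  | neg φ ih => exact not_congr (ih hσ)
  | conj φ ψ ihφ ihψ => exact and_congr (ihφ hσ) (ihψ hσ)
  | untl φ ψ ihφ ihψ => simp only [sat, tau, qsat, ihφ (hσ.suffix _), ihψ (hσ.suffix _)]
  | next φ ih => exact ih (hσ.suffix 1)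
  | fall φ ih => exact forall₃_congr fun π hπ _ => ih hπ
  | oblig φ ih =>
    simp only [sat, tau, qsat, qsat_qimp]
    exact forall₃_congr fun π hπ _ => imp_congr qsat_next_qG_not_iff_failureFree.symm (ih hπ)
  | robust φ ih =>
    simp only [sat, tau, qsat, qsat_tauDia_iff hT hσ, ← ih hσ, not_or, not_exists, not_and,
      not_not]
    exact and_congr_right fun _ => forall₃_congr fun π hπ _ => ih hπ

end Translation

theorem tau_linear_and_truth_preserving :
    ∃ c : ℕ, ∀ φ : Form ℕ, ViolFree 0 φ →
      (tau φ).len ≤ c * φ.len ∧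
      ∀ (W : Type) (M : KStruct ℕ W) (σ : ℕ → W),
        IsTree M → IsRoCTL M 0 → IsFullpath M σ →
        (sat M 0 φ σ ↔ qsat (tau φ) M σ) :=
  ⟨55, fun φ _ => ⟨len_tau_le φ, fun _ _ _ hT _ hσ => sat_iff_qsat_tau hT φ hσ⟩⟩
end Stmt7
end

section
/- A RoCTL* formula φ is satisfiable (there exist a RoCTL-structure M and fullpath σ through M with M,σ ⊨ φ) if and only if the QCTL* formula AGEN¬v ∧ τ(φ) is satisfiable in the tree semantics of QCTL*. -/
/-!
On a tree (indeed on any forest), τ is faithful fullpath by fullpath. The only non-trivial case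
is ▲: choose the fresh atom y of τ^▽ to hold exactly on the worlds of σ; since in a forest a
fullpath that meets σ at position i agrees with σ up to i, the fullpaths admitted by τ^▽ are then
exactly σ and its deviations.

RoCTL* satisfaction is invariant under bounded morphisms. So a RoCTL-structure may be replaced
by the part of its unravelling generated by the root, a tree in which AGEN¬v holds because
every world has a successor without v. Conversely, in a serial tree satisfying AGEN¬v at σ,
every world reachable from σ 0 lies on a fullpath from σ 0 and so has a successor without v:
the part generated by σ 0 is a RoCTL-structure.
-/

namespace Stmt8
/-- A structure: a set of worlds `W`, a binary accessibility relation and a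
valuation assigning to each world the set of atoms true there. -/
structure KStruct (V : Type) (W : Type) where
  rel : W → W → Prop
  val : W → Set V

variable {V W W' : Type}

/-- The accessibility relation is serial. -/
def KStruct.Serial (M : KStruct V W) : Prop := ∀ w, ∃ v, M.rel w v

/-- `σ` is a fullpath through `M`. -/
def IsFullpath (M : KStruct V W) (σ : ℕ → W) : Prop := ∀ i, M.rel (σ i) (σ (i + 1))

/-- The suffix `σ≥n` of a fullpath. -/
def suffix (σ : ℕ → W) (n : ℕ) : ℕ → W := fun i => σ (i + n)

/-- A fullpath is failure-free iff the violation atom is false at all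
positions `i > 0`. -/
def FailureFree (M : KStruct V W) (viol : V) (σ : ℕ → W) : Prop :=
  ∀ i, 0 < i → viol ∉ M.val (σ i)

/-- A RoCTL-structure: serial, and every world starts some failure-free fullpath. -/
def IsRoCTL (M : KStruct V W) (viol : V) : Prop :=
  M.Serial ∧ ∀ w, ∃ σ, IsFullpath M σ ∧ σ 0 = w ∧ FailureFree M viol σ

/-- `π` is a deviation from `σ`: for some `i`, `π≤i = σ≤i` and `π≥(i+1)` is
failure-free. -/
def IsDeviation (M : KStruct V W) (viol : V) (σ π : ℕ → W) : Prop :=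
  ∃ i, (∀ j ≤ i, π j = σ j) ∧ FailureFree M viol (suffix π (i + 1))

/-- RoCTL* formulas: atoms, ¬, ∧, U, N, A, O, ▲. -/
inductive Form (V : Type) : Type where
  | atom : V → Form V
  | neg : Form V → Form V
  | conj : Form V → Form V → Form V
  | untl : Form V → Form V → Form V
  | next : Form V → Form V
  | fall : Form V → Form V
  | oblig : Form V → Form V
  | robust : Form V → Form V

/-- Truth of a RoCTL* formula on a fullpath. -/
def sat (M : KStruct V W) (viol : V) : Form V → (ℕ → W) → Prop
  | .atom p, σ => p ∈ M.val (σ 0)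
  | .neg φ, σ => ¬ sat M viol φ σ
  | .conj φ ψ, σ => sat M viol φ σ ∧ sat M viol ψ σ
  | .untl φ ψ, σ => ∃ i, sat M viol ψ (suffix σ i) ∧ ∀ j < i, sat M viol φ (suffix σ j)
  | .next φ, σ => sat M viol φ (suffix σ 1)
  | .fall φ, σ => ∀ π, IsFullpath M π → π 0 = σ 0 → sat M viol φ π
  | .oblig φ, σ => ∀ π, IsFullpath M π → π 0 = σ 0 → FailureFree M viol π → sat M viol φ π
  | .robust φ, σ => sat M viol φ σ ∧
      ∀ π, IsFullpath M π → IsDeviation M viol σ π → sat M viol φ π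

/-- RoCTL* formulas have atoms ranging over `V \ {viol}`. -/
def ViolFree (viol : V) : Form V → Prop
  | .atom p => p ≠ viol
  | .neg φ => ViolFree viol φ
  | .conj φ ψ => ViolFree viol φ ∧ ViolFree viol ψ
  | .untl φ ψ => ViolFree viol φ ∧ ViolFree viol ψ
  | .next φ => ViolFree viol φ
  | .fall φ => ViolFree viol φ
  | .oblig φ => ViolFree viol φ
  | .robust φ => ViolFree viol φ
/-- QCTL* formulas: atoms, ¬, ∧, U, N, A and the quantifier ∀p. -/
inductive QForm (V : Type) : Type where
  | atom : V → QForm V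
  | neg : QForm V → QForm V
  | conj : QForm V → QForm V → QForm V
  | untl : QForm V → QForm V → QForm V
  | next : QForm V → QForm V
  | fall : QForm V → QForm V
  | qall : V → QForm V → QForm V

/-- `M'` is a `p`-variant of `M`: same worlds and relation, valuations agreeing
except possibly on `p`. -/
def PVariant (M M' : KStruct V W) (p : V) : Prop :=
  M'.rel = M.rel ∧ ∀ w, M'.val w \ {p} = M.val w \ {p}

/-- Truth of a QCTL* formula on a fullpath of a structure. -/
def qsat : QForm V → KStruct V W → (ℕ → W) → Prop
  | .atom p, M, σ => p ∈ M.val (σ 0)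
  | .neg φ, M, σ => ¬ qsat φ M σ
  | .conj φ ψ, M, σ => qsat φ M σ ∧ qsat ψ M σ
  | .untl φ ψ, M, σ => ∃ i, qsat ψ M (suffix σ i) ∧ ∀ j < i, qsat φ M (suffix σ j)
  | .next φ, M, σ => qsat φ M (suffix σ 1)
  | .fall φ, M, σ => ∀ π, IsFullpath M π → π 0 = σ 0 → qsat φ M π
  | .qall p φ, M, σ => ∀ M' : KStruct V W, PVariant M M' p → qsat φ M' σ

/-- `M` is a tree: unique predecessors, no cycles, and a root reaching all
other nodes. -/
def IsTree (M : KStruct V W) : Prop :=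
  (∀ x y z : W, M.rel x z → M.rel y z → x = y) ∧
  (∀ x : W, ¬ Relation.TransGen M.rel x x) ∧
  ∃ r : W, ∀ y : W, y ≠ r → Relation.TransGen M.rel r y

namespace QForm

def qor (a b : QForm V) : QForm V := .neg (.conj (.neg a) (.neg b))
def qimp (a b : QForm V) : QForm V := qor (.neg a) b
def qtop (viol : V) : QForm V := .neg (.conj (.atom viol) (.neg (.atom viol)))
def qF (viol : V) (a : QForm V) : QForm V := .untl (qtop viol) a
def qG (viol : V) (a : QForm V) : QForm V := .neg (qF viol (.neg a))
def qE (a : QForm V) : QForm V := .neg (.fall (.neg a))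

end QForm
/-- The largest atom occurring in a QCTL* formula over ℕ. -/
def QForm.maxAtom : QForm ℕ → ℕ
  | .atom p => p
  | .neg φ => maxAtom φ
  | .conj φ ψ => max (maxAtom φ) (maxAtom ψ)
  | .untl φ ψ => max (maxAtom φ) (maxAtom ψ)
  | .next φ => maxAtom φ
  | .fall φ => maxAtom φ
  | .qall p φ => max p (maxAtom φ)

/-- Atoms are natural numbers; the violation atom `v` is `0`. γ = NNG¬v. -/
def gammaQ : QForm ℕ := .next (.next (QForm.qG 0 (.neg (.atom 0))))

/-- τ^▽(ψ) = ∀y [Gy → E[(Gy ∨ F(y ∧ γ)) ∧ ψ]] for an atom `y` not occurring in `ψ`. -/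
def tauDia (ψ : QForm ℕ) : QForm ℕ :=
  let y := ψ.maxAtom + 1
  .qall y (QForm.qimp (QForm.qG 0 (.atom y))
    (QForm.qE (.conj
      (QForm.qor (QForm.qG 0 (.atom y)) (QForm.qF 0 (.conj (.atom y) gammaQ))) ψ)))

/-- The translation τ from RoCTL* into QCTL*. -/
def tau : Form ℕ → QForm ℕ
  | .atom p => .atom p
  | .neg φ => .neg (tau φ)
  | .conj φ ψ => .conj (tau φ) (tau ψ)
  | .untl φ ψ => .untl (tau φ) (tau ψ)
  | .next φ => .next (tau φ)
  | .fall φ => .fall (tau φ)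
  | .oblig φ => .fall (QForm.qimp (.next (QForm.qG 0 (.neg (.atom 0)))) (tau φ))
  | .robust φ => .neg (tauDia (.neg (tau φ)))
/-- AGEN¬v. -/
def agenQ : QForm ℕ := .fall (QForm.qG 0 (QForm.qE (.next (.neg (.atom 0)))))

section Paths

variable {M : KStruct V W}

@[simp] lemma suffix_apply (σ : ℕ → W) (n i : ℕ) : suffix σ n i = σ (i + n) := rfl

lemma suffix_suffix (σ : ℕ → W) (m n : ℕ) : suffix (suffix σ m) n = suffix σ (m + n) := by
  funext i
  simp only [suffix_apply, Nat.add_comm m n, Nat.add_assoc]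

lemma isFullpath_suffix {σ : ℕ → W} (h : IsFullpath M σ) (n : ℕ) :
    IsFullpath M (suffix σ n) :=
  fun i => by simpa [Nat.add_right_comm] using h (i + n)

lemma isFullpath_cons {σ : ℕ → W} {w : W} (hσ : IsFullpath M σ) (hw : M.rel w (σ 0)) :
    IsFullpath M (Stream'.cons w σ)
  | 0 => hw
  | i + 1 => hσ i

lemma exists_fullpath_of_forall_exists_rel {P : W → Prop}
    (h : ∀ x, ∃ u, M.rel x u ∧ P u) (w : W) :
    ∃ σ, IsFullpath M σ ∧ σ 0 = w ∧ ∀ i, P (σ (i + 1)) := by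
  choose g hg hP using h
  refine ⟨fun n => g^[n] w, fun i => ?_, rfl, fun i => ?_⟩
  · simpa only [Function.iterate_succ_apply'] using hg (g^[i] w)
  · simpa only [Function.iterate_succ_apply'] using hP (g^[i] w)

lemma KStruct.Serial.exists_fullpath (hM : M.Serial) (w : W) :
    ∃ σ, IsFullpath M σ ∧ σ 0 = w :=
  let ⟨σ, hσ, h0, _⟩ := exists_fullpath_of_forall_exists_rel (P := fun _ => True)
    (fun x => (hM x).imp fun _ h => ⟨h, trivial⟩) w
  ⟨σ, hσ, h0⟩

lemma KStruct.Serial.exists_fullpath_through (hM : M.Serial) {x w : W}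
    (h : Relation.ReflTransGen M.rel x w) :
    ∃ σ n, IsFullpath M σ ∧ σ 0 = x ∧ σ n = w := by
  induction h using Relation.ReflTransGen.head_induction_on with
  | refl =>
    obtain ⟨σ, hσ, h0⟩ := hM.exists_fullpath w
    exact ⟨σ, 0, hσ, h0, h0⟩
  | head hxy _ ih =>
    obtain ⟨σ, n, hσ, h0, hn⟩ := ih
    exact ⟨Stream'.cons _ σ, n + 1, isFullpath_cons hσ (h0 ▸ hxy), rfl, hn⟩

lemma isRoCTL_iff {viol : V} : IsRoCTL M viol ↔ ∀ w, ∃ u, M.rel w u ∧ viol ∉ M.val u := by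
  constructor
  · rintro ⟨-, h⟩ w
    obtain ⟨σ, hσ, rfl, hff⟩ := h w
    exact ⟨σ 1, hσ 0, hff 1 one_pos⟩
  · intro h
    refine ⟨fun w => (h w).imp fun _ => And.left, fun w => ?_⟩
    obtain ⟨σ, hσ, h0, hσv⟩ := exists_fullpath_of_forall_exists_rel h w
    refine ⟨σ, hσ, h0, fun i hi => ?_⟩
    obtain ⟨j, rfl⟩ := Nat.exists_eq_succ_of_ne_zero hi.ne'
    exact hσv j

def splice (σ τ : ℕ → W) (i : ℕ) : ℕ → W := fun j => if j ≤ i then σ j else τ (j - i)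

lemma splice_of_le {σ τ : ℕ → W} {i j : ℕ} (h : j ≤ i) : splice σ τ i j = σ j := if_pos h

lemma comp_splice (f : W → W') (σ τ : ℕ → W) (i : ℕ) :
    f ∘ splice σ τ i = splice (f ∘ σ) (f ∘ τ) i := by
  funext j
  simp only [splice, Function.comp_apply, apply_ite f]

lemma splice_suffix {σ ρ : ℕ → W} {i : ℕ} (h : ∀ j ≤ i, σ j = ρ j) :
    splice σ (suffix ρ i) i = ρ := by
  funext j
  by_cases hj : j ≤ i
  · simp [splice, hj, h j hj]
  · simp [splice, hj, Nat.sub_add_cancel (Nat.le_of_not_le hj)]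

lemma isFullpath_splice {σ τ : ℕ → W} {i : ℕ} (hσ : IsFullpath M σ) (hτ : IsFullpath M τ)
    (h0 : τ 0 = σ i) : IsFullpath M (splice σ τ i) := by
  intro j
  rcases lt_trichotomy j i with hj | rfl | hj
  · simpa [splice, hj.le, Nat.succ_le_of_lt hj] using hσ j
  · simpa [splice, ← h0] using hτ 0
  · have hτj := hτ (j - i)
    rw [← Nat.sub_add_comm hj.le] at hτj
    simpa [splice, Nat.not_le.mpr hj, Nat.not_le.mpr (Nat.lt_succ_of_lt hj)] using hτj

end Paths

section Tree

variable {M : KStruct V W} {σ π : ℕ → W}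

lemma IsFullpath.transGen (h : IsFullpath M σ) {i j : ℕ} (hij : i < j) :
    Relation.TransGen M.rel (σ i) (σ j) := by
  induction j, hij using Nat.le_induction with
  | base => exact .single (h i)
  | succ j _ ih => exact ih.tail (h j)

structure IsForest (M : KStruct V W) : Prop where
  pred_unique : ∀ x y z, M.rel x z → M.rel y z → x = y
  acyclic : ∀ x, ¬ Relation.TransGen M.rel x x

lemma IsTree.isForest (hT : IsTree M) : IsForest M := ⟨hT.1, hT.2.1⟩

lemma IsForest.injective_of_isFullpath (hF : IsForest M) (h : IsFullpath M σ) :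
    Function.Injective σ := by
  intro i j hij
  by_contra hne
  rcases lt_or_gt_of_ne hne with hlt | hlt <;>
  · have hc := h.transGen hlt
    rw [hij] at hc
    exact hF.acyclic _ hc

lemma IsForest.agree_of_apply_eq (hF : IsForest M) (hσ : IsFullpath M σ) (hπ : IsFullpath M π)
    (h0 : π 0 = σ 0) {i j : ℕ} (h : π i = σ j) : i = j ∧ ∀ k ≤ i, π k = σ k := by
  induction i generalizing j with
  | zero =>
    obtain rfl : j = 0 := hF.injective_of_isFullpath hσ (h.symm.trans h0)
    exact ⟨rfl, fun k hk => by rw [Nat.le_zero.mp hk, h0]⟩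
  | succ i ih =>
    cases j with
    | zero =>
      have hc := hπ.transGen i.succ_pos
      rw [h0, h] at hc
      exact absurd hc (hF.acyclic _)
    | succ j =>
      obtain ⟨rfl, hag⟩ := ih (hF.pred_unique _ _ _ (h ▸ hπ i) (hσ j))
      exact ⟨rfl, fun k hk => (Nat.le_succ_iff.mp hk).elim (hag k) fun hk => hk ▸ h⟩

end Tree

section QSemantics

variable {M M' M₂ : KStruct V W} {σ π : ℕ → W} {p q : V}

@[simp] lemma qsat_qor {a b : QForm V} :
    qsat (QForm.qor a b) M σ ↔ qsat a M σ ∨ qsat b M σ := by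
  simp only [QForm.qor, qsat]
  tauto

@[simp] lemma qsat_qimp {a b : QForm V} :
    qsat (QForm.qimp a b) M σ ↔ (qsat a M σ → qsat b M σ) := by
  simp only [QForm.qimp, qsat_qor, qsat]
  tauto

@[simp] lemma qsat_qF {viol : V} {a : QForm V} :
    qsat (QForm.qF viol a) M σ ↔ ∃ i, qsat a M (suffix σ i) := by
  simp only [QForm.qF, QForm.qtop, qsat]
  exact exists_congr fun i => and_iff_left fun _ _ => by tauto

@[simp] lemma qsat_qG {viol : V} {a : QForm V} :
    qsat (QForm.qG viol a) M σ ↔ ∀ i, qsat a M (suffix σ i) := by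
  simp [QForm.qG, qsat]

@[simp] lemma qsat_qE {a : QForm V} :
    qsat (QForm.qE a) M σ ↔ ∃ π, IsFullpath M π ∧ π 0 = σ 0 ∧ qsat a M π := by
  simp [QForm.qE, qsat]

lemma pVariant_iff :
    PVariant M M' p ↔ M'.rel = M.rel ∧ ∀ w, ∀ x ≠ p, (x ∈ M'.val w ↔ x ∈ M.val w) := by
  simp only [PVariant, Set.ext_iff, Set.mem_sdiff, Set.mem_singleton_iff]
  refine and_congr_right fun _ => forall_congr' fun w =>
    ⟨fun h x hx => by simpa [hx] using h x, fun h x => ?_⟩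
  by_cases hx : x = p <;> simp [hx, h]

lemma PVariant.symm (h : PVariant M M' p) : PVariant M' M p :=
  ⟨h.1.symm, fun w => (h.2 w).symm⟩

lemma PVariant.isFullpath_iff (h : PVariant M M' p) : IsFullpath M' π ↔ IsFullpath M π := by
  simp only [IsFullpath, h.1]

lemma PVariant.failureFree_iff {viol : V} (h : PVariant M M' p) (hp : viol ≠ p) :
    FailureFree M' viol π ↔ FailureFree M viol π := by
  simp only [FailureFree, (pVariant_iff.mp h).2 _ viol hp]

def KStruct.setAtom (M : KStruct V W) (p : V) (S : W → Prop) : KStruct V W :=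
  ⟨M.rel, fun w => {x | x = p ∧ S w ∨ x ≠ p ∧ x ∈ M.val w}⟩

lemma KStruct.mem_setAtom_val_self {S : W → Prop} {w : W} :
    p ∈ (M.setAtom p S).val w ↔ S w := by
  simp [setAtom]

lemma KStruct.pVariant_setAtom {S : W → Prop} : PVariant M (M.setAtom p S) p :=
  pVariant_iff.mpr ⟨rfl, fun w x hx => by simp [setAtom, hx]⟩

lemma PVariant.exists_commute (h : PVariant M M' p) (h' : PVariant M' M₂ q) :
    ∃ N, PVariant M N q ∧ PVariant N M₂ p := by
  refine ⟨M₂.setAtom p (p ∈ M.val ·), pVariant_iff.mpr ⟨h'.1.trans h.1, fun w x hx => ?_⟩,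
    KStruct.pVariant_setAtom.symm⟩
  by_cases hxp : x = p
  · subst hxp
    exact KStruct.mem_setAtom_val_self
  · simp [KStruct.setAtom, hxp, (pVariant_iff.mp h').2 w x hx, (pVariant_iff.mp h).2 w x hxp]

end QSemantics

section Translation

variable {M : KStruct ℕ W} {σ : ℕ → W}

lemma PVariant.qsat_iff {p : ℕ} {M' : KStruct ℕ W} {ψ : QForm ℕ} (h : PVariant M M' p)
    (hp : ψ.maxAtom < p) : qsat ψ M σ ↔ qsat ψ M' σ := by
  induction ψ generalizing M M' σ with
  | atom q => exact ((pVariant_iff.mp h).2 _ q (ne_of_lt hp)).symm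
  | neg a ih => exact not_congr (ih h hp)
  | conj a b iha ihb =>
    simp only [QForm.maxAtom, max_lt_iff] at hp
    exact and_congr (iha h hp.1) (ihb h hp.2)
  | untl a b iha ihb =>
    simp only [QForm.maxAtom, max_lt_iff] at hp
    exact exists_congr fun i => and_congr (ihb h hp.2)
      (forall₂_congr fun j _ => iha h hp.1)
  | next a ih => exact ih h hp
  | fall a ih =>
    simp only [qsat, h.isFullpath_iff]
    exact forall₃_congr fun π _ _ => ih h hp
  | qall q a ih =>
    simp only [QForm.maxAtom, max_lt_iff] at hp
    have key : ∀ {M M' : KStruct ℕ W}, PVariant M M' p →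
        qsat (.qall q a) M σ → qsat (.qall q a) M' σ := fun h hM M₂ h₂ =>
      let ⟨N, hN, hN₂⟩ := h.exists_commute h₂
      (ih hN₂ hp.2).mp (hM N hN)
    exact ⟨key h, key h.symm⟩

lemma qsat_next_qG_not_viol_iff :
    qsat (.next (QForm.qG 0 (.neg (.atom 0)))) M σ ↔ FailureFree M 0 σ := by
  simp only [qsat, qsat_qG, suffix_apply, FailureFree]
  refine ⟨fun h i hi => ?_, fun h i => h _ (by omega)⟩
  obtain ⟨j, rfl⟩ := Nat.exists_eq_succ_of_ne_zero hi.ne'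
  simpa using h j

lemma qsat_tauDia_iff {ψ : QForm ℕ} :
    qsat (tauDia ψ) M σ ↔ ∀ M', PVariant M M' (ψ.maxAtom + 1) →
      (∀ i, ψ.maxAtom + 1 ∈ M'.val (σ i)) →
      ∃ π, IsFullpath M' π ∧ π 0 = σ 0 ∧
        ((∀ i, ψ.maxAtom + 1 ∈ M'.val (π i)) ∨
          ∃ i, ψ.maxAtom + 1 ∈ M'.val (π i) ∧ FailureFree M' 0 (suffix π (i + 1))) ∧
        qsat ψ M' π := by
  have hγ : ∀ (M' : KStruct ℕ W) π, qsat gammaQ M' π ↔ FailureFree M' 0 (suffix π 1) :=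
    fun _ _ => qsat_next_qG_not_viol_iff
  simp only [tauDia, qsat, qsat_qimp, qsat_qG, qsat_qE, qsat_qor, qsat_qF, hγ, suffix_apply,
    zero_add, suffix_suffix]

lemma qsat_tauDia_iff_exists_deviation (hF : IsForest M) (hσ : IsFullpath M σ) {ψ : QForm ℕ} :
    qsat (tauDia ψ) M σ ↔
      qsat ψ M σ ∨ ∃ π, IsFullpath M π ∧ IsDeviation M 0 σ π ∧ qsat ψ M π := by
  have hy : ψ.maxAtom < ψ.maxAtom + 1 := Nat.lt_succ_self _
  have hv : (0 : ℕ) ≠ ψ.maxAtom + 1 := Nat.succ_ne_zero _ |>.symm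
  rw [qsat_tauDia_iff]
  constructor
  · intro h
    have hPV := KStruct.pVariant_setAtom (M := M) (p := ψ.maxAtom + 1) (S := fun w => ∃ i, σ i = w)
    obtain ⟨π, hπ, h0, hleave, hψ⟩ :=
      h _ hPV fun i => KStruct.mem_setAtom_val_self.mpr ⟨i, rfl⟩
    rw [← hPV.qsat_iff hy] at hψ
    rw [hPV.isFullpath_iff] at hπ
    rcases hleave with hall | ⟨i, hi, hff⟩
    · left
      convert hψ using 1
      funext i
      obtain ⟨j, hj⟩ := KStruct.mem_setAtom_val_self.mp (hall i)
      exact ((hF.agree_of_apply_eq hσ hπ h0 hj.symm).2 i le_rfl).symm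
    · obtain ⟨j, hj⟩ := KStruct.mem_setAtom_val_self.mp hi
      obtain ⟨rfl, hag⟩ := hF.agree_of_apply_eq hσ hπ h0 hj.symm
      exact Or.inr ⟨π, hπ, ⟨i, hag, (hPV.failureFree_iff hv).mp hff⟩, hψ⟩
  · intro h M' hPV hyσ
    rcases h with hψ | ⟨π, hπ, ⟨i, hag, hff⟩, hψ⟩
    · exact ⟨σ, hPV.isFullpath_iff.mpr hσ, rfl, .inl hyσ, (hPV.qsat_iff hy).mp hψ⟩
    · refine ⟨π, hPV.isFullpath_iff.mpr hπ, hag 0 (Nat.zero_le _),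
        .inr ⟨i, hag i le_rfl ▸ hyσ i, (hPV.failureFree_iff hv).mpr hff⟩, (hPV.qsat_iff hy).mp hψ⟩

lemma qsat_agenQ_iff :
    qsat agenQ M σ ↔ ∀ π, IsFullpath M π → π 0 = σ 0 →
      ∀ i, ∃ ρ, IsFullpath M ρ ∧ ρ 0 = π i ∧ 0 ∉ M.val (ρ 1) := by
  simp [agenQ, qsat]

lemma qsat_agenQ_of_isRoCTL (hM : IsRoCTL M 0) : qsat agenQ M σ :=
  qsat_agenQ_iff.mpr fun π _ _ i =>
    let ⟨ρ, hρ, h0, hff⟩ := hM.2 (π i)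
    ⟨ρ, hρ, h0, hff 1 one_pos⟩

lemma sat_iff_qsat_tau (hF : IsForest M) (φ : Form ℕ) (hσ : IsFullpath M σ) :
    sat M 0 φ σ ↔ qsat (tau φ) M σ := by
  induction φ generalizing σ with
  | atom p => rfl
  | neg a ih => exact not_congr (ih hσ)
  | conj a b iha ihb => exact and_congr (iha hσ) (ihb hσ)
  | untl a b iha ihb =>
    exact exists_congr fun i => and_congr (ihb (isFullpath_suffix hσ i))
      (forall₂_congr fun j _ => iha (isFullpath_suffix hσ j))
  | next a ih => exact ih (isFullpath_suffix hσ 1)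
  | fall a ih => exact forall₃_congr fun π hπ _ => ih hπ
  | oblig a ih =>
    refine forall₃_congr fun π hπ _ => ?_
    rw [qsat_qimp, qsat_next_qG_not_viol_iff]
    exact imp_congr_right fun _ => ih hπ
  | robust a ih =>
    rw [sat, tau, qsat, qsat_tauDia_iff_exists_deviation hF hσ]
    simp only [qsat, ← ih hσ, not_or, not_not, not_exists, not_and]
    exact and_congr_right fun _ => forall₃_congr fun π hπ _ => ih hπ

end Translation

structure IsBoundedMorphism (M' : KStruct V W') (M : KStruct V W) (f : W' → W) : Prop where
  val_eq : ∀ a, M'.val a = M.val (f a)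
  rel_map : ∀ {a b}, M'.rel a b → M.rel (f a) (f b)
  exists_rel : ∀ {a u}, M.rel (f a) u → ∃ b, M'.rel a b ∧ f b = u

namespace IsBoundedMorphism

variable {W'' : Type} {M : KStruct V W} {M' : KStruct V W'} {f : W' → W} {viol : V}
  {π : ℕ → W'} {ρ : ℕ → W}

lemma comp {M'' : KStruct V W''} {g : W'' → W'} (hf : IsBoundedMorphism M' M f)
    (hg : IsBoundedMorphism M'' M' g) : IsBoundedMorphism M'' M (f ∘ g) where
  val_eq a := (hg.val_eq a).trans (hf.val_eq (g a))
  rel_map h := hf.rel_map (hg.rel_map h)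
  exists_rel h := by
    obtain ⟨b, hb, rfl⟩ := hf.exists_rel h
    obtain ⟨c, hc, rfl⟩ := hg.exists_rel hb
    exact ⟨c, hc, rfl⟩

lemma isFullpath_comp (hf : IsBoundedMorphism M' M f) (hπ : IsFullpath M' π) :
    IsFullpath M (f ∘ π) :=
  fun i => hf.rel_map (hπ i)

lemma exists_lift (hf : IsBoundedMorphism M' M f) (hρ : IsFullpath M ρ) {a : W'}
    (h0 : ρ 0 = f a) : ∃ π, IsFullpath M' π ∧ π 0 = a ∧ f ∘ π = ρ := by
  choose g hg hfg using fun (b : W') (u : W) (h : M.rel (f b) u) => hf.exists_rel h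
  let lift : ∀ n, {b : W' // f b = ρ n} := fun n =>
    Nat.rec ⟨a, h0.symm⟩ (fun n b => ⟨g b.1 _ (by rw [b.2]; exact hρ n), hfg _ _ _⟩) n
  exact ⟨fun n => (lift n).1, fun n => hg _ _ _, rfl, funext fun n => (lift n).2⟩

lemma failureFree_comp_iff (hf : IsBoundedMorphism M' M f) :
    FailureFree M viol (f ∘ π) ↔ FailureFree M' viol π := by
  simp only [FailureFree, Function.comp_apply, hf.val_eq]

lemma isDeviation_comp (hf : IsBoundedMorphism M' M f) {π' : ℕ → W'}
    (h : IsDeviation M' viol π π') : IsDeviation M viol (f ∘ π) (f ∘ π') :=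
  let ⟨i, hag, hff⟩ := h
  ⟨i, fun j hj => congrArg f (hag j hj), hf.failureFree_comp_iff.mpr hff⟩

lemma exists_lift_deviation (hf : IsBoundedMorphism M' M f) (hπ : IsFullpath M' π)
    (hρ : IsFullpath M ρ) (h : IsDeviation M viol (f ∘ π) ρ) :
    ∃ π', IsFullpath M' π' ∧ IsDeviation M' viol π π' ∧ f ∘ π' = ρ := by
  obtain ⟨i, hag, hff⟩ := h
  obtain ⟨τ, hτ, hτ0, hfτ⟩ :=
    hf.exists_lift (a := π i) (isFullpath_suffix hρ i) (by simpa using hag i le_rfl)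
  have hsplice : f ∘ splice π τ i = ρ := by
    rw [comp_splice, hfτ, splice_suffix fun j hj => (hag j hj).symm]
  refine ⟨splice π τ i, isFullpath_splice hπ hτ hτ0, ⟨i, fun j hj => splice_of_le hj, ?_⟩,
    hsplice⟩
  rw [← hf.failureFree_comp_iff]
  change FailureFree M viol (suffix (f ∘ splice π τ i) (i + 1))
  rwa [hsplice]

lemma sat_comp_iff (hf : IsBoundedMorphism M' M f) (φ : Form V) (hπ : IsFullpath M' π) :
    sat M viol φ (f ∘ π) ↔ sat M' viol φ π := by
  induction φ generalizing π with
  | atom p =>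
    show p ∈ M.val (f (π 0)) ↔ p ∈ M'.val (π 0)
    rw [hf.val_eq]
  | neg a ih => exact not_congr (ih hπ)
  | conj a b iha ihb => exact and_congr (iha hπ) (ihb hπ)
  | untl a b iha ihb =>
    exact exists_congr fun i => and_congr (ihb (isFullpath_suffix hπ i))
      (forall₂_congr fun j _ => iha (isFullpath_suffix hπ j))
  | next a ih => exact ih (isFullpath_suffix hπ 1)
  | fall a ih =>
    refine ⟨fun h π' hπ' h0 => (ih hπ').mp (h _ (hf.isFullpath_comp hπ') (congrArg f h0)),
      fun h ρ hρ h0 => ?_⟩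
    obtain ⟨π', hπ', h0', rfl⟩ := hf.exists_lift hρ h0
    exact (ih hπ').mpr (h π' hπ' h0')
  | oblig a ih =>
    refine ⟨fun h π' hπ' h0 hff => (ih hπ').mp
      (h _ (hf.isFullpath_comp hπ') (congrArg f h0) (hf.failureFree_comp_iff.mpr hff)),
      fun h ρ hρ h0 hff => ?_⟩
    obtain ⟨π', hπ', h0', rfl⟩ := hf.exists_lift hρ h0
    exact (ih hπ').mpr (h π' hπ' h0' (hf.failureFree_comp_iff.mp hff))
  | robust a ih =>
    refine and_congr (ih hπ) ⟨fun h π' hπ' hdev => (ih hπ').mp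
      (h _ (hf.isFullpath_comp hπ') (hf.isDeviation_comp hdev)), fun h ρ hρ hdev => ?_⟩
    obtain ⟨π', hπ', hdev', rfl⟩ := hf.exists_lift_deviation hπ hρ hdev
    exact (ih hπ').mpr (h π' hπ' hdev')

lemma isRoCTL (hf : IsBoundedMorphism M' M f) (hM : IsRoCTL M viol) : IsRoCTL M' viol := by
  refine isRoCTL_iff.mpr fun a => ?_
  obtain ⟨u, hu, hv⟩ := isRoCTL_iff.mp hM (f a)
  obtain ⟨b, hab, rfl⟩ := hf.exists_rel hu
  exact ⟨b, hab, hf.val_eq b ▸ hv⟩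

end IsBoundedMorphism

def KStruct.generated (M : KStruct V W) (r : W) :
    KStruct V {w // Relation.ReflTransGen M.rel r w} :=
  ⟨fun a b => M.rel a b, fun a => M.val a⟩

/-- A history `r → w₁ → ⋯ → wₙ` is stored backwards as `[wₙ, …, w₁]`, so that its current world
is the head (`r` for `[]`); lists that are not histories are unreachable from `[]`. -/
def KStruct.unravel (M : KStruct V W) (r : W) : KStruct V (List W) :=
  ⟨fun a b => ∃ w, b = w :: a ∧ M.rel (a.headD r) w, fun a => M.val (a.headD r)⟩

namespace KStruct

variable {M : KStruct V W} {r : W}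

lemma generated_isBoundedMorphism : IsBoundedMorphism (M.generated r) M Subtype.val where
  val_eq _ := rfl
  rel_map h := h
  exists_rel {a u} h := ⟨⟨u, a.2.tail h⟩, h, rfl⟩

lemma generated_reflTransGen (a : {w // Relation.ReflTransGen M.rel r w}) :
    Relation.ReflTransGen (M.generated r).rel ⟨r, .refl⟩ a := by
  obtain ⟨w, h⟩ := a
  induction h with
  | refl => exact .refl
  | tail hb hbc ih => exact ih.tail (show M.rel _ _ from hbc)

lemma isTree_generated (hF : IsForest M) : IsTree (M.generated r) :=
  ⟨fun _ _ _ hxz hyz => Subtype.ext (hF.pred_unique _ _ _ hxz hyz),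
    fun x hx => hF.acyclic x.1 (hx.lift Subtype.val fun _ _ h => h),
    ⟨r, .refl⟩, fun a ha =>
      (Relation.reflTransGen_iff_eq_or_transGen.mp (generated_reflTransGen a)).resolve_left ha⟩

lemma unravel_isBoundedMorphism : IsBoundedMorphism (M.unravel r) M (List.headD · r) where
  val_eq _ := rfl
  rel_map := by
    rintro a _ ⟨w, rfl, h⟩
    exact h
  exists_rel {a u} h := ⟨u :: a, ⟨u, rfl, h⟩, rfl⟩

lemma unravel_isForest : IsForest (M.unravel r) := by
  refine ⟨?_, fun x hx => ?_⟩
  · rintro x y z ⟨w, rfl, -⟩ ⟨w', h, -⟩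
    exact (List.cons.inj h).2
  · have hlen : ∀ {a b}, Relation.TransGen (M.unravel r).rel a b → a.length < b.length := by
      intro a b h
      induction h with
      | single h =>
        obtain ⟨w, rfl, -⟩ := h
        simp
      | tail _ h ih =>
        obtain ⟨w, rfl, -⟩ := h
        simp only [List.length_cons]
        omega
    exact (hlen hx).false

end KStruct

lemma isRoCTL_generated_of_qsat_agenQ {M : KStruct ℕ W} {σ : ℕ → W} (hM : M.Serial)
    (h : qsat agenQ M σ) : IsRoCTL (M.generated (σ 0)) 0 := by
  refine isRoCTL_iff.mpr fun ⟨w, hw⟩ => ?_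
  obtain ⟨π, n, hπ, h0, rfl⟩ := hM.exists_fullpath_through hw
  obtain ⟨ρ, hρ, hρ0, hv⟩ := qsat_agenQ_iff.mp h π hπ h0 n
  have hr : M.rel (π n) (ρ 1) := by rw [← hρ0]; exact hρ 0
  exact ⟨⟨ρ 1, hw.tail hr⟩, hr, hv⟩

theorem sat_iff_tree_QCTL_sat_general (φ : Form ℕ) :
    (∃ (W : Type) (M : KStruct ℕ W) (σ : ℕ → W),
      IsRoCTL M 0 ∧ IsFullpath M σ ∧ sat M 0 φ σ) ↔
    (∃ (W : Type) (M : KStruct ℕ W) (σ : ℕ → W),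
      IsTree M ∧ M.Serial ∧ IsFullpath M σ ∧ qsat (.conj agenQ (tau φ)) M σ) := by
  constructor
  · rintro ⟨W, M, σ, hM, hσ, hφ⟩
    have hf := (KStruct.unravel_isBoundedMorphism (M := M) (r := σ 0)).comp
      (KStruct.generated_isBoundedMorphism (r := []))
    obtain ⟨π, hπ, -, hfπ⟩ := hf.exists_lift hσ (a := ⟨[], .refl⟩) rfl
    have hT := KStruct.isTree_generated (r := []) (KStruct.unravel_isForest (M := M) (r := σ 0))
    have hR := hf.isRoCTL hM
    refine ⟨_, _, π, hT, hR.1, hπ, qsat_agenQ_of_isRoCTL hR,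
      (sat_iff_qsat_tau hT.isForest φ hπ).mp ((hf.sat_comp_iff φ hπ).mp ?_)⟩
    rwa [hfπ]
  · rintro ⟨W, M, σ, hT, hM, hσ, hagen, hτ⟩
    have hf := KStruct.generated_isBoundedMorphism (M := M) (r := σ 0)
    obtain ⟨π, hπ, -, hfπ⟩ := hf.exists_lift hσ (a := ⟨σ 0, .refl⟩) rfl
    refine ⟨_, _, π, isRoCTL_generated_of_qsat_agenQ hM hagen, hπ, (hf.sat_comp_iff φ hπ).mp ?_⟩
    rw [hfπ]
    exact (sat_iff_qsat_tau hT.isForest φ hσ).mpr hτ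

theorem sat_iff_tree_QCTL_sat (φ : Form ℕ) (hVF : ViolFree 0 φ) :
    (∃ (W : Type) (M : KStruct ℕ W) (σ : ℕ → W),
      IsRoCTL M 0 ∧ IsFullpath M σ ∧ sat M 0 φ σ) ↔
    (∃ (W : Type) (M : KStruct ℕ W) (σ : ℕ → W),
      IsTree M ∧ M.Serial ∧ IsFullpath M σ ∧ qsat (.conj agenQ (tau φ)) M σ) :=
  sat_iff_tree_QCTL_sat_general φ

end Stmt8
end

section
/- Let h, l be natural numbers and let A = (Σ, Q, Q0, δ, F) be a symmetric alternating automaton such that for every pair T, T' of ⟨h,l⟩-utrees, A accepts the structure u(T,T') if and only if T and T' are isomorphic. Then 2^{|Q|} ≥ #(h,l). -/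
/-!
Send a utree `T` to the set of states from which `A` accepts the suffix encoding of `T`, the
part of `u(T, T')` after `w_Z`. If this set for `T₁` is contained in the one for `T₂`, an
accepting run on `u(T₁, T₁)` can be cut where it enters `w_Z` and completed by accepting runs
on the suffix encoding of `T₂`; so `A` accepts `u(T₁, T₂)`, and `T₁ ≅ T₂`. Hence isomorphism
classes of utrees inject into the subsets of `Q`.
-/

namespace Stmt19
/-- A structure: a set of worlds `W`, a binary accessibility relation and a
valuation assigning to each world the set of atoms true there. -/
structure KStruct (V : Type) (W : Type) where
  rel : W → W → Prop
  val : W → Set V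

variable {V W W' : Type}

/-- The accessibility relation is serial. -/
def KStruct.Serial (M : KStruct V W) : Prop := ∀ w, ∃ v, M.rel w v

/-- `σ` is a fullpath through `M`. -/
def IsFullpath (M : KStruct V W) (σ : ℕ → W) : Prop := ∀ i, M.rel (σ i) (σ (i + 1))

/-- The suffix `σ≥n` of a fullpath. -/
def suffix (σ : ℕ → W) (n : ℕ) : ℕ → W := fun i => σ (i + n)

/-- A fullpath is failure-free iff the violation atom is false at all
positions `i > 0`. -/
def FailureFree (M : KStruct V W) (viol : V) (σ : ℕ → W) : Prop :=
  ∀ i, 0 < i → viol ∉ M.val (σ i)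

/-- A RoCTL-structure: serial, and every world starts some failure-free fullpath. -/
def IsRoCTL (M : KStruct V W) (viol : V) : Prop :=
  M.Serial ∧ ∀ w, ∃ σ, IsFullpath M σ ∧ σ 0 = w ∧ FailureFree M viol σ

/-- `π` is a deviation from `σ`: for some `i`, `π≤i = σ≤i` and `π≥(i+1)` is
failure-free. -/
def IsDeviation (M : KStruct V W) (viol : V) (σ π : ℕ → W) : Prop :=
  ∃ i, (∀ j ≤ i, π j = σ j) ∧ FailureFree M viol (suffix π (i + 1))

/-- RoCTL* formulas: atoms, ¬, ∧, U, N, A, O, ▲. -/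
inductive Form (V : Type) : Type where
  | atom : V → Form V
  | neg : Form V → Form V
  | conj : Form V → Form V → Form V
  | untl : Form V → Form V → Form V
  | next : Form V → Form V
  | fall : Form V → Form V
  | oblig : Form V → Form V
  | robust : Form V → Form V

/-- Truth of a RoCTL* formula on a fullpath. -/
def sat (M : KStruct V W) (viol : V) : Form V → (ℕ → W) → Prop
  | .atom p, σ => p ∈ M.val (σ 0)
  | .neg φ, σ => ¬ sat M viol φ σ
  | .conj φ ψ, σ => sat M viol φ σ ∧ sat M viol ψ σ
  | .untl φ ψ, σ => ∃ i, sat M viol ψ (suffix σ i) ∧ ∀ j < i, sat M viol φ (suffix σ j)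
  | .next φ, σ => sat M viol φ (suffix σ 1)
  | .fall φ, σ => ∀ π, IsFullpath M π → π 0 = σ 0 → sat M viol φ π
  | .oblig φ, σ => ∀ π, IsFullpath M π → π 0 = σ 0 → FailureFree M viol π → sat M viol φ π
  | .robust φ, σ => sat M viol φ σ ∧
      ∀ π, IsFullpath M π → IsDeviation M viol σ π → sat M viol φ π

/-- RoCTL* formulas have atoms ranging over `V \ {viol}`. -/
def ViolFree (viol : V) : Form V → Prop
  | .atom p => p ≠ viol
  | .neg φ => ViolFree viol φ
  | .conj φ ψ => ViolFree viol φ ∧ ViolFree viol ψ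
  | .untl φ ψ => ViolFree viol φ ∧ ViolFree viol ψ
  | .next φ => ViolFree viol φ
  | .fall φ => ViolFree viol φ
  | .oblig φ => ViolFree viol φ
  | .robust φ => ViolFree viol φ
/-- Finite labelled trees: a label (set of atom indices, `i` standing for `b_i`)
and a finite list of direct subtrees (given as a function from `Fin n`). -/
inductive LTree : Type where
  | node : Set ℕ → (n : ℕ) → (Fin n → LTree) → LTree

/-- Isomorphism of finite labelled trees: equal root labels and a bijection
between the direct subtrees matching isomorphic subtrees. -/
def Iso : LTree → LTree → Prop
  | .node a n f, .node b m g =>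
      a = b ∧ ∃ e : Fin n ≃ Fin m, ∀ i, Iso (f i) (g (e i))

/-- The label of the root. -/
def LTree.labels : LTree → Set ℕ
  | .node a _ _ => a

/-- The height of a tree: 0 for a leaf, otherwise one more than the largest
height of a direct subtree. -/
def height : LTree → ℕ
  | .node _ n f => if n = 0 then 0 else 1 + Finset.univ.sup fun i => height (f i)

/-- The number of isomorphism classes of trees satisfying `P`. -/
noncomputable def countIso (P : LTree → Prop) : ℕ :=
  Nat.card (Quot fun a b : {T : LTree // P T} => Iso a.1 b.1)

/-- `⟨h,l⟩`-utrees: a `⟨0,l⟩`-utree is a single node labelled by a subset of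
`V_l = {1,…,l}`; a `⟨h+1,l⟩`-utree has root labelled ∅ and exactly
`⌊#(h,l)/2⌋` pairwise non-isomorphic direct subtrees, each a `⟨h,l⟩`-utree. -/
def IsUtree (l : ℕ) : ℕ → LTree → Prop
  | 0, T =>
    match T with
    | .node a n _ => n = 0 ∧ a ⊆ Set.Icc 1 l
  | h + 1, T =>
    match T with
    | .node a n f =>
        a = ∅ ∧ n = countIso (fun T' => IsUtree l h T') / 2 ∧
        (∀ i, IsUtree l h (f i)) ∧ ∀ i j : Fin n, i ≠ j → ¬ Iso (f i) (f j)

/-- `#(h,l)` : the number of pairwise non-isomorphic `⟨h,l⟩`-utrees. -/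
noncomputable def hash (h l : ℕ) : ℕ := countIso fun T => IsUtree l h T
/-- The atoms used by the encodings: `b i` for the labels `b_i`, `op`/`cl` for
the brackets `I_{`/`I_}`, `H k`/`HF k` for the height atoms, `mark C` for the
subtree markers `t_C`, and the violation atom `viol`. -/
inductive At : Type where
  | b : ℕ → At
  | op : At
  | cl : At
  | H : ℕ → At
  | HF : ℕ → At
  | mark : LTree → At
  | viol : At

/-- The set of `b`-atoms corresponding to a label. -/
def bset (a : Set ℕ) : Set At := At.b '' a

/-- The list of labels of the prefix encoding of a tree (depth-first:
an opening world, the encodings of the direct subtrees, a closing world). -/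
def prefixLabels : LTree → List (Set At)
  | .node a n f =>
      insert At.op (insert (At.H (height (.node a n f)))
          (insert (At.mark (.node a n f)) (bset a)))
      :: ((List.ofFn fun i => prefixLabels (f i)).flatten
          ++ [{At.cl, At.H (height (.node a n f))}])

/-- The direct subtree of `T` at a position (list of child indices). -/
def subAt : LTree → List ℕ → Option LTree
  | T, [] => some T
  | .node _ n f, i :: p => if h : i < n then subAt (f ⟨i, h⟩) p else none

/-- The worlds of the structure `u(T,T')`: the worlds `w_i` of the prefix
encoding, the final prefix world `w_Z`, the suffix worlds `n_p` (nodes of `T'`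
at position `p`) and their primed copies `n'_p`, and the sink `n_Z`. -/
inductive UW : Type where
  | pre : ℕ → UW
  | wZ : UW
  | nd : List ℕ → UW
  | nd' : List ℕ → UW
  | nZ : UW

/-- The accessibility relation of `u(T,T')`: the linear prefix encoding of `T`
followed by `w_Z`, an edge from `w_Z` to the root of the suffix encoding of
`T'`, the tree edges of `T'`, edges `n_p → n'_p`, `n'_p → n_Z` and
`n_Z → n_Z`.  (Worlds not occurring in the encodings are given an edge to
`n_Z` so the relation is serial; they are unreachable from `w_0`.) -/
def uRel (T T' : LTree) : UW → UW → Prop := fun x y =>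
  match x, y with
  | .pre i, .pre j => j = i + 1 ∧ i + 1 < (prefixLabels T).length
  | .pre i, .wZ => i + 1 = (prefixLabels T).length
  | .pre i, .nZ => (prefixLabels T).length < i + 1
  | .wZ, .nd p => p = []
  | .nd p, .nd q => (∃ i, q = p ++ [i]) ∧ (subAt T' q).isSome
  | .nd p, .nd' q => q = p
  | .nd' _, .nZ => True
  | .nZ, .nZ => True
  | _, _ => False

/-- The valuation of `u(T,T')`: prefix worlds carry the prefix-encoding labels,
unprimed suffix worlds carry `{v}`, a primed suffix world carries the label of
the corresponding node of `T'` together with the `H^F` atom for its height. -/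
def uVal (T T' : LTree) : UW → Set At := fun x =>
  match x with
  | .pre i => (prefixLabels T).getD i ∅
  | .wZ => ∅
  | .nd _ => {At.viol}
  | .nd' p =>
      match subAt T' p with
      | some C => insert (At.HF (height C)) (bset C.labels)
      | none => ∅
  | .nZ => ∅

/-- The structure `u(T,T')`. -/
def uStruct (T T' : LTree) : KStruct At UW := ⟨uRel T T', uVal T T'⟩
/-- A symmetric alternating automaton over alphabet `A` with states `Q`:
initial states, a transition relation assigning to a state and letter the
possible sets of requirements `(□/◇, nextstate)` (`true` standing for `□`),
and a parity acceptance condition given by priorities. -/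
structure SAA (A : Type*) (Q : Type*) where
  init : Set Q
  trans : Q → A → Set (Set (Bool × Q))
  prio : Q → ℕ

/-- `n` occurs infinitely often in the sequence `g`. -/
def InfOften (g : ℕ → ℕ) (n : ℕ) : Prop := ∀ k, ∃ i, k ≤ i ∧ g i = n

/-- A sequence of states satisfies the parity condition: the largest priority
occurring infinitely often is even. -/
def ParityOK {Q : Type*} (prio : Q → ℕ) (ρ : ℕ → Q) : Prop :=
  ∃ n, Even n ∧ InfOften (fun i => prio (ρ i)) n ∧
    ∀ m, InfOften (fun i => prio (ρ i)) m → m ≤ n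

/-- The SAA accepts the pointed structure `(M, a)`: there is a run, i.e. a
`(W × Q)`-labelled tree whose root is labelled by `a` and an initial state,
in which every node can pick a set `X` of requirements allowed by the
transition function such that `□`-requirements are met by children for every
successor and `◇`-requirements by a child for some successor, and in which
every infinite path satisfies the parity condition. -/
def SAAAccepts {V W Q : Type} (A : SAA (Set V) Q) (M : KStruct V W) (a : W) : Prop :=
  ∃ (N : Type) (rel : N → N → Prop) (root : N) (lab : N → W × Q),
    (lab root).1 = a ∧ (lab root).2 ∈ A.init ∧
    (∀ x : N, ∃ X ∈ A.trans (lab x).2 (M.val (lab x).1),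
      (∀ r : Q, (true, r) ∈ X → ∀ u : W, M.rel (lab x).1 u →
        ∃ c : N, rel x c ∧ lab c = (u, r)) ∧
      (∀ r : Q, (false, r) ∈ X → ∃ u : W, M.rel (lab x).1 u ∧
        ∃ c : N, rel x c ∧ lab c = (u, r))) ∧
    (∀ ρ : ℕ → N, (∀ i, rel (ρ i) (ρ (i + 1))) →
      ParityOK A.prio fun i => (lab (ρ i)).2)

/-- The tree unwinding of a pointed structure: worlds are the finite sequences
of steps from `a` (represented by lists, `[]` being the root `a`). -/
def unwind {V W : Type} (M : KStruct V W) (a : W) : KStruct V (List W) where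
  rel := fun l l' => ∃ w, l' = l ++ [w] ∧ M.rel (l.getLastD a) w
  val := fun l => M.val (l.getLastD a)

/-- The SAA accepts a structure iff it accepts its tree unwinding from the
given initial world. -/
def SAAAcceptsStruct {V W Q : Type} (A : SAA (Set V) Q) (M : KStruct V W) (a : W) : Prop :=
  SAAAccepts A (unwind M a) ([] : List W)

section Runs

variable {Q : Type}

def SAA.startAt {α : Type*} (A : SAA α Q) (q : Q) : SAA α Q := { A with init := {q} }

structure IsBisim (M : KStruct V W) (M' : KStruct V W') (Z : W → W' → Prop) : Prop where
  val_eq : ∀ ⦃w w'⦄, Z w w' → M'.val w' = M.val w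
  forth : ∀ ⦃w w' u⦄, Z w w' → M.rel w u → ∃ u', M'.rel w' u' ∧ Z u u'
  back : ∀ ⦃w w' u'⦄, Z w w' → M'.rel w' u' → ∃ u, M.rel w u ∧ Z u u'

theorem IsBisim.symm {M : KStruct V W} {M' : KStruct V W'} {Z : W → W' → Prop}
    (hZ : IsBisim M M' Z) : IsBisim M' M (fun w' w => Z w w') where
  val_eq _ _ h := (hZ.val_eq h).symm
  forth _ _ _ h hu := hZ.back h hu
  back _ _ _ h hu := hZ.forth h hu

theorem isBisim_unwind (M : KStruct V W) (a : W) :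
    IsBisim (unwind M a) M (fun l w => l.getLastD a = w) where
  val_eq := by rintro l _ rfl; rfl
  forth := by rintro l _ _ rfl ⟨u, rfl, hu⟩; exact ⟨u, hu, by simp⟩
  back := by rintro l _ u rfl hu; exact ⟨l ++ [u], ⟨u, rfl, hu⟩, by simp⟩

/-- A run on `M` becomes a run on `M'` by pairing each node with a world of `M'` bisimilar
to its own world; infinite paths, and hence acceptance, are untouched. -/
theorem SAAAccepts.of_isBisim {A : SAA (Set V) Q} {M : KStruct V W} {M' : KStruct V W'}
    {Z : W → W' → Prop} (hZ : IsBisim M M' Z) {a : W} {a' : W'} (ha : Z a a')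
    (h : SAAAccepts A M a) : SAAAccepts A M' a' := by
  obtain ⟨N, rel, root, lab, hroot, hinit, hloc, hpath⟩ := h
  refine ⟨{p : N × W' // Z (lab p.1).1 p.2}, fun p p' => rel p.1.1 p'.1.1,
    ⟨(root, a'), hroot ▸ ha⟩, fun p => (p.1.2, (lab p.1.1).2), rfl, hinit, ?_,
    fun ρ hρ => hpath (fun n => (ρ n).1.1) hρ⟩
  rintro ⟨⟨x, w'⟩, hx⟩
  obtain ⟨X, hX, hbox, hdia⟩ := hloc x
  refine ⟨X, hZ.val_eq hx ▸ hX, fun r hr u' hu' => ?_, fun r hr => ?_⟩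
  · obtain ⟨u, hu, huu'⟩ := hZ.back hx hu'
    obtain ⟨c, hc, hlab⟩ := hbox r hr u hu
    exact ⟨⟨(c, u'), hlab ▸ huu'⟩, hc, by simp [hlab]⟩
  · obtain ⟨u, hu, c, hc, hlab⟩ := hdia r hr
    obtain ⟨u', hu', huu'⟩ := hZ.forth hx hu
    exact ⟨u', hu', ⟨(c, u'), hlab ▸ huu'⟩, hc, by simp [hlab]⟩

theorem saaAcceptsStruct_iff {A : SAA (Set V) Q} {M : KStruct V W} {a : W} :
    SAAAcceptsStruct A M a ↔ SAAAccepts A M a :=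
  ⟨.of_isBisim (isBisim_unwind M a) rfl, .of_isBisim (isBisim_unwind M a).symm rfl⟩

theorem infOften_iff_of_shift {f g : ℕ → ℕ} {k : ℕ} (hfg : ∀ n, f (n + k) = g n) (m : ℕ) :
    InfOften f m ↔ InfOften g m := by
  constructor
  · intro hf j
    obtain ⟨n, hn, hfn⟩ := hf (j + k)
    refine ⟨n - k, by omega, ?_⟩
    rw [← hfg, Nat.sub_add_cancel (by omega), hfn]
  · intro hg j
    obtain ⟨n, hn, hgn⟩ := hg j
    exact ⟨n + k, by omega, (hfg n).trans hgn⟩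

theorem ParityOK.of_shift {prio : Q → ℕ} {ρ ρ' : ℕ → Q} {k : ℕ} (hρ : ParityOK prio ρ)
    (hρ' : ∀ n, ρ' (n + k) = ρ n) : ParityOK prio ρ' := by
  obtain ⟨m, hm, hinf, hmax⟩ := hρ
  have hiff := infOften_iff_of_shift (f := fun n => prio (ρ' n)) (g := fun n => prio (ρ n))
    (fun n => congrArg prio (hρ' n))
  exact ⟨m, hm, (hiff m).2 hinf, fun j hj => hmax j ((hiff j).1 hj)⟩

theorem Sum.Lex.path_cases {α β : Type*} {r : α → α → Prop} {s : β → β → Prop}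
    {ρ : ℕ → α ⊕ β} (hρ : ∀ n, Sum.Lex r s (ρ n) (ρ (n + 1))) :
    (∃ σ : ℕ → α, (∀ n, r (σ n) (σ (n + 1))) ∧ ∀ n, ρ n = .inl (σ n)) ∨
      ∃ k, ∃ τ : ℕ → β, (∀ n, s (τ n) (τ (n + 1))) ∧ ∀ n, ρ (n + k) = .inr (τ n) := by
  by_cases hright : ∃ k b, ρ k = .inr b
  · obtain ⟨k, b, hk⟩ := hright
    have hstay : ∀ n, ∃ b, ρ (n + k) = .inr b := by
      intro n
      induction n with
      | zero => exact ⟨b, by simpa using hk⟩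
      | succ n ih =>
        obtain ⟨b, hb⟩ := ih
        have hstep := hρ (n + k)
        rw [hb, show n + k + 1 = n + 1 + k by omega] at hstep
        cases hnext : ρ (n + 1 + k) with
        | inl a => exact absurd (hnext ▸ hstep) Sum.lex_inr_inl
        | inr b' => exact ⟨b', rfl⟩
    choose τ hτ using hstay
    refine .inr ⟨k, τ, fun n => ?_, hτ⟩
    have hstep := hρ (n + k)
    rwa [hτ, show n + k + 1 = n + 1 + k by omega, hτ, Sum.lex_inr_inr] at hstep
  · simp only [not_exists] at hright
    have hleft : ∀ n, ∃ a, ρ n = .inl a := fun n => by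
      cases hn : ρ n with
      | inl a => exact ⟨a, rfl⟩
      | inr b => exact absurd hn (hright n b)
    choose σ hσ using hleft
    refine .inl ⟨σ, fun n => ?_, hσ⟩
    have hstep := hρ n
    rwa [hσ, hσ, Sum.lex_inl_inl] at hstep

theorem Sigma.Lex.exists_fiber_path {ι : Type*} {N : ι → Type*} {s : ∀ i, N i → N i → Prop}
    {τ : ℕ → Σ i, N i} (hτ : ∀ n, Sigma.Lex (fun _ _ => False) s (τ n) (τ (n + 1))) :
    ∃ i, ∃ z : ℕ → N i, (∀ n, s i (z n) (z (n + 1))) ∧ ∀ n, τ n = ⟨i, z n⟩ := by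
  have hstep : ∀ n i (x : N i), τ n = ⟨i, x⟩ → ∃ x', τ (n + 1) = ⟨i, x'⟩ ∧ s i x x' := by
    intro n i x hx
    have h := hτ n
    rw [hx] at h
    generalize τ (n + 1) = p at h
    cases h with
    | left _ _ h => exact h.elim
    | right _ _ h => exact ⟨_, rfl, h⟩
  have hfiber : ∀ n, ∃ x, τ n = ⟨(τ 0).1, x⟩ := by
    intro n
    induction n with
    | zero => exact ⟨(τ 0).2, rfl⟩
    | succ n ih =>
      obtain ⟨x, hx⟩ := ih
      obtain ⟨x', hx', -⟩ := hstep n _ x hx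
      exact ⟨x', hx'⟩
  choose z hz using hfiber
  refine ⟨_, z, fun n => ?_, hz⟩
  obtain ⟨x', hx', hs⟩ := hstep n _ _ (hz n)
  rwa [sigma_mk_injective ((hz (n + 1)).symm.trans hx')]

/-- Cut the run at the exits of `S` and attach runs on `M'` there. Ordering the combined run
by `Sum.Lex` adds edges but no new kind of infinite path: each one is either a path of the
old run or ends in a path of a single attached run. -/
theorem SAAAccepts.graft {A : SAA (Set V) Q} {M M' : KStruct V W} {S : Set W}
    (hval : ∀ w ∈ S, M'.val w = M.val w) (hrel : ∀ w ∈ S, M'.rel w = M.rel w)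
    (hexit : ∀ w ∈ S, ∀ u ∉ S, M.rel w u → ∀ q,
      SAAAccepts (A.startAt q) M u → SAAAccepts (A.startAt q) M' u)
    {a : W} (ha : a ∈ S) (h : SAAAccepts A M a) : SAAAccepts A M' a := by
  obtain ⟨N, rel, root, lab, hroot, hinit, hloc, hpath⟩ := h
  let Y := {c : N // (lab c).1 ∉ S ∧ ∃ w ∈ S, M.rel w (lab c).1}
  have hgraft (y : Y) : SAAAccepts (A.startAt (lab y.1).2) M' (lab y.1).1 := by
    obtain ⟨c, hc, w, hw, hwc⟩ := y
    exact hexit w hw _ hc hwc _ ⟨N, rel, c, lab, rfl, rfl, hloc, hpath⟩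
  choose N' rel' root' lab' hroot' hinit' hloc' hpath' using hgraft
  have hlab_root (y : Y) : lab' y (root' y) = lab y.1 := Prod.ext (hroot' y) (hinit' y)
  let L : {x : N // (lab x).1 ∈ S} ⊕ (Σ y, N' y) → W × Q :=
    Sum.elim (fun x => lab x.1) (fun p => lab' p.1 p.2)
  let R := Sum.Lex (fun x x' : {x : N // (lab x).1 ∈ S} => rel x.1 x'.1)
    (Sigma.Lex (fun _ _ => False) rel')
  have hchild (x : {x : N // (lab x).1 ∈ S}) {c : N} (hc : rel x.1 c) {u : W} {r : Q}
      (hlab : lab c = (u, r)) (hu : M.rel (lab x.1).1 u) : ∃ n, R (.inl x) n ∧ L n = (u, r) := by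
    by_cases hcS : (lab c).1 ∈ S
    · exact ⟨.inl ⟨c, hcS⟩, Sum.lex_inl_inl.2 hc, hlab⟩
    · exact ⟨.inr ⟨⟨c, hcS, _, x.2, hlab ▸ hu⟩, root' _⟩, Sum.Lex.sep _ _,
        (hlab_root _).trans hlab⟩
  refine ⟨_, R, .inl ⟨root, hroot ▸ ha⟩, L, hroot, hinit, ?_, fun ρ hρ => ?_⟩
  · rintro (x | ⟨y, z⟩)
    · obtain ⟨X, hX, hbox, hdia⟩ := hloc x.1
      refine ⟨X, (hval _ x.2).symm ▸ hX, fun r hr u hu => ?_, fun r hr => ?_⟩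
      · have hu : M.rel (lab x.1).1 u := hrel _ x.2 ▸ hu
        obtain ⟨c, hc, hlab⟩ := hbox r hr u hu
        exact hchild x hc hlab hu
      · obtain ⟨u, hu, c, hc, hlab⟩ := hdia r hr
        exact ⟨u, hrel _ x.2 ▸ hu, hchild x hc hlab hu⟩
    · obtain ⟨X, hX, hbox, hdia⟩ := hloc' y z
      refine ⟨X, hX, fun r hr u hu => ?_, fun r hr => ?_⟩
      · obtain ⟨c, hc, hlab⟩ := hbox r hr u hu
        exact ⟨.inr ⟨y, c⟩, Sum.Lex.inr (Sigma.Lex.right _ _ hc), hlab⟩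
      · obtain ⟨u, hu, c, hc, hlab⟩ := hdia r hr
        exact ⟨u, hu, .inr ⟨y, c⟩, Sum.Lex.inr (Sigma.Lex.right _ _ hc), hlab⟩
  · rcases Sum.Lex.path_cases hρ with ⟨σ, hσ, hρσ⟩ | ⟨k, τ, hτ, hρτ⟩
    · exact (hpath (fun n => (σ n).1) hσ).of_shift (k := 0) fun n => by simp [hρσ, L]
    · obtain ⟨y, z, hz, hτz⟩ := Sigma.Lex.exists_fiber_path hτ
      exact (hpath' y z hz).of_shift (k := k) fun n => by simp [hρτ, hτz, L]

end Runs

section Encoding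

variable {Q : Type}

def UW.IsPre : UW → Prop
  | .pre _ => True
  | _ => False

theorem isBisim_uStruct_suffix (T₁ T₂ T' : LTree) :
    IsBisim (uStruct T₁ T') (uStruct T₂ T') (fun w w' => w = w' ∧ ¬ w.IsPre) where
  val_eq := by
    rintro (_ | _ | _ | _ | _) _ ⟨rfl, hw⟩ <;> first | rfl | exact (hw trivial).elim
  forth := by
    rintro w _ u ⟨rfl, hw⟩ hu
    exact ⟨u, by cases w <;> cases u <;> simp_all [uStruct, uRel, UW.IsPre]⟩
  back := by
    rintro w _ u ⟨rfl, hw⟩ hu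
    exact ⟨u, by cases w <;> cases u <;> simp_all [uStruct, uRel, UW.IsPre]⟩

def prefixWorlds (T : LTree) : Set UW := {w | ∃ i < (prefixLabels T).length, w = .pre i}

theorem pre_zero_mem_prefixWorlds (T : LTree) : UW.pre 0 ∈ prefixWorlds T := by
  cases T
  exact ⟨0, by simp [prefixLabels], rfl⟩

theorem uRel_pre_eq (T T₁' T₂' : LTree) (i : ℕ) :
    uRel T T₂' (.pre i) = uRel T T₁' (.pre i) := by
  funext u
  cases u <;> rfl

theorem eq_wZ_of_uRel_of_mem_prefixWorlds {T T' : LTree} {w u : UW} (hw : w ∈ prefixWorlds T)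
    (hu : u ∉ prefixWorlds T) (hwu : uRel T T' w u) : u = .wZ := by
  obtain ⟨i, hi, rfl⟩ := hw
  cases u with
  | pre j => exact (hu ⟨j, hwu.1 ▸ hwu.2, rfl⟩).elim
  | nZ => simp only [uRel] at hwu; omega
  | _ => first | rfl | exact hwu.elim

/-- From `w_Z` only the suffix encoding of `T` is reachable, so the first argument of
`uStruct T T` is immaterial here. -/
def suffixStates (A : SAA (Set At) Q) (T : LTree) : Set Q :=
  {q | SAAAccepts (A.startAt q) (uStruct T T) .wZ}

theorem SAAAccepts.uStruct_of_suffixStates_subset {A : SAA (Set At) Q} {T₁ T₂ : LTree}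
    (hsub : suffixStates A T₁ ⊆ suffixStates A T₂)
    (h : SAAAccepts A (uStruct T₁ T₁) (.pre 0)) : SAAAccepts A (uStruct T₁ T₂) (.pre 0) := by
  refine h.graft (S := prefixWorlds T₁) ?_ ?_ ?_ (pre_zero_mem_prefixWorlds T₁)
  · rintro _ ⟨i, -, rfl⟩
    rfl
  · rintro _ ⟨i, -, rfl⟩
    exact uRel_pre_eq T₁ T₁ T₂ i
  · intro w hw u hu hwu q hq
    obtain rfl := eq_wZ_of_uRel_of_mem_prefixWorlds hw hu hwu
    exact (hsub hq).of_isBisim (isBisim_uStruct_suffix T₂ T₁ T₂) ⟨rfl, id⟩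

end Encoding

theorem iso_refl (T : LTree) : Iso T T := by
  induction T with
  | node a n f ih => exact ⟨rfl, Equiv.refl _, ih⟩

theorem Nat.card_set_eq_two_pow (α : Type*) [Finite α] : Nat.card (Set α) = 2 ^ Nat.card α := by
  have := Fintype.ofFinite α
  rw [Nat.card_eq_fintype_card, Nat.card_eq_fintype_card, Fintype.card_set]

theorem iso_of_suffixStates_subset {h l : ℕ} {Q : Type} {A : SAA (Set At) Q}
    (hA : ∀ T T' : LTree, IsUtree l h T → IsUtree l h T' →
      (SAAAcceptsStruct A (uStruct T T') (UW.pre 0) ↔ Iso T T'))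
    {T₁ T₂ : LTree} (hT₁ : IsUtree l h T₁) (hT₂ : IsUtree l h T₂)
    (hsub : suffixStates A T₁ ⊆ suffixStates A T₂) : Iso T₁ T₂ := by
  have hdiag := saaAcceptsStruct_iff.1 ((hA T₁ T₁ hT₁ hT₁).2 (iso_refl T₁))
  exact (hA T₁ T₂ hT₁ hT₂).1 (saaAcceptsStruct_iff.2 (hdiag.uStruct_of_suffixStates_subset hsub))

theorem saa_states_lower_bound (h l : ℕ) {Q : Type} [Finite Q]
    (A : SAA (Set At) Q)
    (hA : ∀ T T' : LTree, IsUtree l h T → IsUtree l h T' →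
      (SAAAcceptsStruct A (uStruct T T') (UW.pre 0) ↔ Iso T T')) :
    hash h l ≤ 2 ^ Nat.card Q := by
  let classes := Quot fun a b : {T : LTree // IsUtree l h T} => Iso a.1 b.1
  have hinj : Function.Injective fun c : classes => suffixStates A c.out.1 := by
    intro c d hcd
    rw [← c.out_eq, ← d.out_eq]
    exact Quot.sound (iso_of_suffixStates_subset hA c.out.2 d.out.2 hcd.le)
  calc hash h l = Nat.card classes := rfl
    _ ≤ Nat.card (Set Q) := Nat.card_le_card_of_injective _ hinj
    _ = 2 ^ Nat.card Q := Nat.card_set_eq_two_pow Q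
end Stmt19
end
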